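/- arXiv:2011.13985 — 8 statements merged into one kernel-verified Lean document; each statement's English description precedes it below -/
import Mathlib

section
/- Let g, f be formal power series over ℚ with g(0) = 1 and f = X·q where q(0) = 1, let M be the Riordan matrix of (g, f), let f̄ be the compositional inverse of f, writing f̄ = X·q̄ with q̄(0) = 1. Let P be the unique matrix with ∑_{j=0}^{n} M_{n,j}·P_{j,k} = M_{n+2,k} for all n, k, let P̃ be the second production matrix of M, i.e. P̃_{n,k} = P_{n,k+1}, and let T be the matrix produced by P̃, i.e. T_{0,k} = δ_{0,k} and T_{n+1,k} = ∑_{j=0}^{n+1} T_{n,j}·P̃_{j,k} for all n, k. Let R be the Riordan matrix of the pair (q̄/(g∘f̄), X·q̄²), where g∘f̄ denotes substitution of f̄ into g. Then T is the (two-sided) inverse of R: for all n, k, ∑_{j=0}^{n} T_{n,j}·R_{j,k} = δ_{n,k}. -/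
open PowerSeries Finset

/-- The Riordan matrix of the pair `(g, f)`: entries `M n k = [Xⁿ] (g * fᵏ)`. -/
noncomputable def riordan (g f : PowerSeries ℚ) (n k : ℕ) : ℚ :=
  PowerSeries.coeff n (g * f ^ k)

/-- Substitution of the power series `a` (with zero constant term) into `f`,
i.e. the composite `f(a)`. -/
noncomputable def psSubst (a f : PowerSeries ℚ) : PowerSeries ℚ :=
  PowerSeries.mk fun n =>
    PowerSeries.coeff n
      (∑ i ∈ Finset.range (n + 1), PowerSeries.C (PowerSeries.coeff i f) * a ^ i)

/-- coeff of `X^k * B` below `k` vanishes. -/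
lemma coeff_X_pow_mul_lt {k n : ℕ} (h : n < k) (B : PowerSeries ℚ) :
    coeff n ((X : PowerSeries ℚ) ^ k * B) = 0 := by
  rw [PowerSeries.coeff_mul]
  apply Finset.sum_eq_zero
  rintro ⟨u, v⟩ huv
  rw [Finset.HasAntidiagonal.mem_antidiagonal] at huv
  have : u ≠ k := by omega
  simp [PowerSeries.coeff_X_pow, this]

lemma coeff_pow_eq_zero {a : PowerSeries ℚ} (ha : constantCoeff a = 0)
    {n i : ℕ} (h : n < i) : coeff n (a ^ i) = 0 := by
  obtain ⟨s, rfl⟩ := PowerSeries.X_dvd_iff.2 ha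
  rw [mul_pow]
  exact coeff_X_pow_mul_lt h _

lemma coeff_psSubst {a : PowerSeries ℚ} (ha : constantCoeff a = 0)
    (F : PowerSeries ℚ) (n : ℕ) :
    coeff n (psSubst a F) = ∑ i ∈ range (n + 1), coeff i F * coeff n (a ^ i) := by
  simp [psSubst, PowerSeries.coeff_mk, map_sum]

lemma coeff_psSubst' {a : PowerSeries ℚ} (ha : constantCoeff a = 0)
    (F : PowerSeries ℚ) {n N : ℕ} (h : n < N) :
    coeff n (psSubst a F) = ∑ i ∈ range N, coeff i F * coeff n (a ^ i) := by
  rw [coeff_psSubst ha]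
  apply Finset.sum_subset
  · intro x hx; rw [Finset.mem_range] at *; omega
  · intro x hx hx'
    rw [Finset.mem_range] at *
    rw [coeff_pow_eq_zero ha (by omega), mul_zero]

lemma constantCoeff_psSubst {a : PowerSeries ℚ} (ha : constantCoeff a = 0)
    (F : PowerSeries ℚ) :
    constantCoeff (psSubst a F) = constantCoeff F := by
  have := coeff_psSubst ha F 0
  simpa [PowerSeries.coeff_zero_eq_constantCoeff] using this

lemma psSubst_X {a : PowerSeries ℚ} (ha : constantCoeff a = 0) :
    psSubst a X = a := by
  ext n
  rw [coeff_psSubst ha]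
  rcases Nat.eq_zero_or_pos n with rfl | hn
  · simp [PowerSeries.coeff_zero_eq_constantCoeff, ha]
  · rw [Finset.sum_eq_single 1]
    · simp
    · intro i hi hi1
      rcases Nat.eq_zero_or_pos i with rfl | hi0
      · simp
      · rw [PowerSeries.coeff_X, if_neg (by omega), zero_mul]
    · intro h; exact absurd (Finset.mem_range.2 (by omega)) h

lemma psSubst_X_left (F : PowerSeries ℚ) : psSubst X F = F := by
  ext n
  rw [coeff_psSubst (by simp) F]
  rw [Finset.sum_eq_single n]
  · simp [PowerSeries.coeff_X_pow]
  · intro i hi hin; simp [PowerSeries.coeff_X_pow, Ne.symm hin]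
  · intro h; exact absurd (Finset.mem_range.2 (by omega)) h

lemma psSubst_one {a : PowerSeries ℚ} (ha : constantCoeff a = 0) :
    psSubst a 1 = 1 := by
  ext n
  rw [coeff_psSubst ha]
  rw [Finset.sum_eq_single 0]
  · simp
  · intro i hi hi0; simp [PowerSeries.coeff_one, hi0]
  · simp

lemma sum_square_eq_sum_antidiagonal (n : ℕ) (t : ℕ × ℕ → ℚ)
    (h0 : ∀ p : ℕ × ℕ, n < p.1 + p.2 → t p = 0) :
    ∑ p ∈ range (n+1) ×ˢ range (n+1), t p
      = ∑ m ∈ range (n+1), ∑ p ∈ Finset.HasAntidiagonal.antidiagonal m, t p := by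
  rw [← Finset.sum_biUnion]
  · apply (Finset.sum_subset _ _).symm
    · intro p hp
      simp only [Finset.mem_biUnion, Finset.mem_range, Finset.HasAntidiagonal.mem_antidiagonal] at hp
      obtain ⟨m, hm, hpm⟩ := hp
      simp only [Finset.mem_product, Finset.mem_range]
      omega
    · intro p hp hnp
      apply h0
      by_contra h
      apply hnp
      simp only [Finset.mem_biUnion, Finset.mem_range, Finset.HasAntidiagonal.mem_antidiagonal]
      exact ⟨p.1 + p.2, by omega, rfl⟩
  · intro x hx y hy hxy
    apply Finset.disjoint_left.2
    intro p h1 h2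
    rw [Finset.HasAntidiagonal.mem_antidiagonal] at h1 h2
    exact hxy (h1 ▸ h2)

lemma psSubst_mul {a : PowerSeries ℚ} (ha : constantCoeff a = 0)
    (F G : PowerSeries ℚ) :
    psSubst a (F * G) = psSubst a F * psSubst a G := by
  ext n
  rw [coeff_psSubst ha, PowerSeries.coeff_mul]
  have hR : ∀ p ∈ Finset.HasAntidiagonal.antidiagonal n,
      coeff p.1 (psSubst a F) * coeff p.2 (psSubst a G)
      = ∑ i ∈ range (n+1), ∑ j ∈ range (n+1),
          coeff i F * coeff j G * (coeff p.1 (a ^ i) * coeff p.2 (a ^ j)) := by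
    intro p hp
    rw [Finset.HasAntidiagonal.mem_antidiagonal] at hp
    rw [coeff_psSubst' ha F (show p.1 < n + 1 by omega),
        coeff_psSubst' ha G (show p.2 < n + 1 by omega), Finset.sum_mul_sum]
    apply Finset.sum_congr rfl; intro i _; apply Finset.sum_congr rfl; intro j _; ring
  rw [Finset.sum_congr rfl hR]
  rw [Finset.sum_comm]
  have hswap : ∀ i ∈ range (n+1),
      ∑ p ∈ Finset.HasAntidiagonal.antidiagonal n, ∑ j ∈ range (n+1),
        coeff i F * coeff j G * (coeff p.1 (a ^ i) * coeff p.2 (a ^ j))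
      = ∑ j ∈ range (n+1), coeff i F * coeff j G * coeff n (a ^ (i + j)) := by
    intro i _
    rw [Finset.sum_comm]
    apply Finset.sum_congr rfl
    intro j _
    rw [← Finset.mul_sum, pow_add, PowerSeries.coeff_mul]
  rw [Finset.sum_congr rfl hswap]
  rw [← Finset.sum_product']
  rw [sum_square_eq_sum_antidiagonal n
      (fun p => coeff p.1 F * coeff p.2 G * coeff n (a ^ (p.1 + p.2)))
      (fun p hp => by rw [coeff_pow_eq_zero ha hp, mul_zero])]
  apply Finset.sum_congr rfl
  intro m hm
  rw [Finset.mem_range] at hm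
  rw [PowerSeries.coeff_mul, Finset.sum_mul]
  apply Finset.sum_congr rfl
  intro p hp
  rw [Finset.HasAntidiagonal.mem_antidiagonal] at hp
  rw [hp]

lemma psSubst_pow {a : PowerSeries ℚ} (ha : constantCoeff a = 0)
    (F : PowerSeries ℚ) (k : ℕ) :
    psSubst a (F ^ k) = (psSubst a F) ^ k := by
  induction k with
  | zero => simpa using psSubst_one ha
  | succ k ih => rw [pow_succ, pow_succ, psSubst_mul ha, ih]

lemma psSubst_assoc {a b : PowerSeries ℚ} (ha : constantCoeff a = 0)
    (hb : constantCoeff b = 0) (F : PowerSeries ℚ) :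
    psSubst a (psSubst b F) = psSubst (psSubst a b) F := by
  ext n
  rw [coeff_psSubst ha, coeff_psSubst (by rw [constantCoeff_psSubst ha]; exact hb) F]
  have h1 : ∀ m ∈ range (n+1),
      coeff m (psSubst b F) * coeff n (a ^ m)
      = ∑ i ∈ range (n+1), coeff i F * (coeff m (b ^ i) * coeff n (a ^ m)) := by
    intro m hm
    rw [Finset.mem_range] at hm
    rw [coeff_psSubst' hb F (show m < n + 1 by omega), Finset.sum_mul]
    apply Finset.sum_congr rfl; intro i _; ring
  rw [Finset.sum_congr rfl h1, Finset.sum_comm]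
  apply Finset.sum_congr rfl
  intro i _
  rw [← Finset.mul_sum, ← psSubst_pow ha b i, coeff_psSubst ha]

lemma coeff_diag (s : PowerSeries ℚ) (d : ℕ) :
    coeff d ((X * s) ^ d) = (constantCoeff s) ^ d := by
  rw [mul_pow]
  have := PowerSeries.coeff_X_pow_mul (s ^ d) d 0
  simp only [zero_add] at this
  rw [this, PowerSeries.coeff_zero_eq_constantCoeff, map_pow]

lemma psSubst_injective {s : PowerSeries ℚ} (hs : constantCoeff s ≠ 0)
    {A B : PowerSeries ℚ} (h : psSubst (X * s) A = psSubst (X * s) B) : A = B := by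
  have ha : constantCoeff (X * s) = 0 := by simp
  ext d
  induction d using Nat.strong_induction_on with
  | _ d ih =>
    have h1 := congrArg (coeff d) h
    rw [coeff_psSubst ha, coeff_psSubst ha, Finset.sum_range_succ, Finset.sum_range_succ] at h1
    have h2 : ∀ i ∈ range d,
        coeff i A * coeff d ((X * s) ^ i) = coeff i B * coeff d ((X * s) ^ i) := by
      intro i hi; rw [ih i (Finset.mem_range.1 hi)]
    rw [Finset.sum_congr rfl h2] at h1
    have h3 : coeff d A * coeff d ((X * s) ^ d)
        = coeff d B * coeff d ((X * s) ^ d) := by linarith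
    rw [coeff_diag] at h3
    exact mul_right_cancel₀ (pow_ne_zero d hs) h3

lemma X_mul_cancel {A B : PowerSeries ℚ} (h : X * A = X * B) : A = B := by
  ext n
  have := congrArg (coeff (n+1)) h
  rwa [PowerSeries.coeff_succ_X_mul, PowerSeries.coeff_succ_X_mul] at this

lemma ps_inv_unique {u b : PowerSeries ℚ} (hu : constantCoeff u = 1)
    (h : u * b = 1) : b = u⁻¹ := by
  have h1 : u * u⁻¹ = 1 := PowerSeries.mul_inv_cancel u (by rw [hu]; exact one_ne_zero)
  calc b = (u * u⁻¹) * b := by rw [h1, one_mul]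
  _ = u⁻¹ * (u * b) := by ring
  _ = u⁻¹ := by rw [h, mul_one]

lemma riordan_tri (g' s : PowerSeries ℚ) {n k : ℕ} (h : n < k) :
    riordan g' (X * s) n k = 0 := by
  unfold riordan
  rw [mul_pow, show g' * ((X:PowerSeries ℚ)^k * s^k) = X^k * (g' * s^k) by ring]
  exact coeff_X_pow_mul_lt h _

lemma riordan_diag (g' s : PowerSeries ℚ) (n : ℕ) :
    riordan g' (X * s) n n
      = constantCoeff g' * (constantCoeff s) ^ n := by
  unfold riordan
  rw [mul_pow, show g' * ((X:PowerSeries ℚ)^n * s^n) = X^n * (g' * s^n) by ring]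
  have := PowerSeries.coeff_X_pow_mul (g' * s ^ n) n 0
  simp only [zero_add] at this
  rw [this, PowerSeries.coeff_zero_eq_constantCoeff, map_mul, map_pow]

/-- Riordan product lemma: `[Xⁿ](g'·(F∘a)) = ∑_j [Xʲ]F · [Xⁿ](g'·aʲ)`. -/
lemma coeff_mul_psSubst (g' F : PowerSeries ℚ) {a : PowerSeries ℚ}
    (ha : constantCoeff a = 0) (n : ℕ) :
    coeff n (g' * psSubst a F)
      = ∑ j ∈ range (n+1), coeff j F * coeff n (g' * a ^ j) := by
  rw [PowerSeries.coeff_mul]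
  have h1 : ∀ p ∈ Finset.HasAntidiagonal.antidiagonal n,
      coeff p.1 g' * coeff p.2 (psSubst a F)
      = ∑ j ∈ range (n+1), coeff j F * (coeff p.1 g' * coeff p.2 (a ^ j)) := by
    intro p hp
    rw [Finset.HasAntidiagonal.mem_antidiagonal] at hp
    rw [coeff_psSubst' ha F (show p.2 < n + 1 by omega), Finset.mul_sum]
    apply Finset.sum_congr rfl; intro j _; ring
  rw [Finset.sum_congr rfl h1, Finset.sum_comm]
  apply Finset.sum_congr rfl
  intro j _
  rw [← Finset.mul_sum, PowerSeries.coeff_mul]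

/-- Cancellation by the unitriangular matrix `M`. -/
lemma M_cancel {g q : PowerSeries ℚ} (hg : constantCoeff g = 1)
    (hq : constantCoeff q = 1) (v : ℕ → ℚ)
    (h : ∀ n, ∑ j ∈ range (n+1), riordan g (X * q) n j * v j = 0) :
    ∀ n, v n = 0 := by
  intro n
  induction n using Nat.strong_induction_on with
  | _ n ih =>
    have h1 := h n
    rw [Finset.sum_range_succ] at h1
    have h2 : ∀ j ∈ range n, riordan g (X * q) n j * v j = 0 := by
      intro j hj; rw [ih j (Finset.mem_range.1 hj), mul_zero]
    rw [Finset.sum_eq_zero h2, zero_add, riordan_diag, hg, hq, one_pow, one_mul, one_mul] at h1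
    exact h1

variable {g q qbar : PowerSeries ℚ}

/-- `f̄ ∘ f = X` from `f ∘ f̄ = X`. -/
lemma left_inv (hqbar : constantCoeff qbar = 1)
    (hcomp : psSubst (X * qbar) (X * q) = X) :
    psSubst (X * q) (X * qbar) = X := by
  apply psSubst_injective (s := qbar) (by rw [hqbar]; exact one_ne_zero)
  rw [psSubst_assoc (by simp) (by simp), hcomp, psSubst_X_left, psSubst_X (by simp)]

lemma subst_qbar (hq : constantCoeff q = 1) (hqbar : constantCoeff qbar = 1)
    (hcomp : psSubst (X * qbar) (X * q) = X) :
    psSubst (X * q) qbar = q⁻¹ := by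
  have h1 := left_inv hqbar hcomp
  rw [psSubst_mul (by simp : constantCoeff (X * q) = 0) X qbar,
      psSubst_X (by simp)] at h1
  rw [mul_assoc] at h1
  have h3 : q * psSubst (X * q) qbar = 1 := _root_.X_mul_cancel (by rw [h1, mul_one])
  exact ps_inv_unique hq h3

lemma subst_g (hqbar : constantCoeff qbar = 1)
    (hcomp : psSubst (X * qbar) (X * q) = X) :
    psSubst (X * q) (psSubst (X * qbar) g) = g := by
  rw [psSubst_assoc (by simp) (by simp), left_inv hqbar hcomp, psSubst_X_left]

lemma subst_ginv (hg : constantCoeff g = 1) (hqbar : constantCoeff qbar = 1)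
    (hcomp : psSubst (X * qbar) (X * q) = X) :
    psSubst (X * q) ((psSubst (X * qbar) g)⁻¹) = g⁻¹ := by
  have hu : constantCoeff (psSubst (X * qbar) g) = 1 := by
    rw [constantCoeff_psSubst (by simp), hg]
  have h1 : psSubst (X * qbar) g * (psSubst (X * qbar) g)⁻¹ = 1 :=
    PowerSeries.mul_inv_cancel _ (by rw [hu]; exact one_ne_zero)
  have h2 := congrArg (psSubst (X * q)) h1
  rw [psSubst_mul (by simp), psSubst_one (by simp), subst_g hqbar hcomp] at h2
  exact ps_inv_unique hg h2

lemma subst_hl (hg : constantCoeff g = 1) (hq : constantCoeff q = 1)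
    (hqbar : constantCoeff qbar = 1)
    (hcomp : psSubst (X * qbar) (X * q) = X) (k : ℕ) :
    psSubst (X * q) ((qbar * (psSubst (X * qbar) g)⁻¹) * (X * qbar ^ 2) ^ k)
      = (q⁻¹ * g⁻¹) * (X * q⁻¹) ^ k := by
  have ha : constantCoeff (X * q) = 0 := by simp
  have hqq : q * q⁻¹ = 1 := PowerSeries.mul_inv_cancel q (by rw [hq]; exact one_ne_zero)
  rw [psSubst_mul ha, psSubst_pow ha, psSubst_mul ha, subst_qbar hq hqbar hcomp,
      subst_ginv hg hqbar hcomp, psSubst_mul ha, psSubst_X ha, psSubst_pow ha,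
      subst_qbar hq hqbar hcomp]
  congr 1
  have h5 : (X * q) * (q⁻¹) ^ 2 = X * (q * q⁻¹) * q⁻¹ := by ring
  rw [h5, hqq, mul_one]

/-- The Riordan product computation: row `n` of `riordan g' f` against columns of `R`. -/
lemma MR (hg : constantCoeff g = 1) (hq : constantCoeff q = 1)
    (hqbar : constantCoeff qbar = 1)
    (hcomp : psSubst (X * qbar) (X * q) = X) (g' : PowerSeries ℚ) (n k : ℕ) :
    ∑ j ∈ range (n+1), riordan g' (X * q) n j *
        riordan (qbar * (psSubst (X * qbar) g)⁻¹) (X * qbar ^ 2) j k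
      = coeff n (g' * ((q⁻¹ * g⁻¹) * (X * q⁻¹) ^ k)) := by
  have h := coeff_mul_psSubst g'
    ((qbar * (psSubst (X * qbar) g)⁻¹) * (X * qbar ^ 2) ^ k)
    (show constantCoeff (X * q) = 0 by simp) n
  rw [subst_hl hg hq hqbar hcomp] at h
  rw [h]
  apply Finset.sum_congr rfl
  intro j _
  unfold riordan
  rw [mul_comm]

theorem second_production_matrix_generates
    (g q qbar : PowerSeries ℚ)
    (hg : constantCoeff g = 1) (hq : constantCoeff q = 1)
    (hqbar : constantCoeff qbar = 1)
    (hcomp : psSubst (X * qbar) (X * q) = X)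
    (P T : ℕ → ℕ → ℚ)
    (hP : ∀ n k, ∑ j ∈ range (n + 1), riordan g (X * q) n j * P j k
          = riordan g (X * q) (n + 2) k)
    (hT0 : ∀ k, T 0 k = if k = 0 then 1 else 0)
    (hT : ∀ n k, T (n + 1) k = ∑ j ∈ range (n + 2), T n j * P j (k + 1)) :
    ∀ n k, ∑ j ∈ range (n + 1),
        T n j * riordan (qbar * (psSubst (X * qbar) g)⁻¹) (X * qbar ^ 2) j k
      = if n = k then 1 else 0 := by
  have hgg : g * g⁻¹ = 1 := PowerSeries.mul_inv_cancel g (by rw [hg]; exact one_ne_zero)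
  have hqq : q * q⁻¹ = 1 := PowerSeries.mul_inv_cancel q (by rw [hq]; exact one_ne_zero)
  set R : ℕ → ℕ → ℚ := riordan (qbar * (psSubst (X * qbar) g)⁻¹) (X * qbar ^ 2) with hR
  set M : ℕ → ℕ → ℚ := riordan g (X * q) with hM
  have MRg : ∀ n k, ∑ j ∈ range (n+1), M n j * R j k
      = coeff n (q⁻¹ * (X * q⁻¹) ^ k) := by
    intro n k
    rw [hM, hR, MR hg hq hqbar hcomp g n k]
    congr 1
    rw [show g * ((q⁻¹ * g⁻¹) * (X * q⁻¹)^k) = (g * g⁻¹) * (q⁻¹ * (X * q⁻¹)^k) by ring,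
        hgg, one_mul]
  have MRgf : ∀ n k, ∑ j ∈ range (n+1), M n (j+1) * R j k
      = coeff n (X * (X * q⁻¹) ^ k) := by
    intro n k
    have e : ∀ j ∈ range (n+1), M n (j+1) * R j k
        = riordan (g * (X * q)) (X * q) n j * R j k := by
      intro j _
      rw [hM]
      unfold riordan
      congr 2
      ring
    rw [Finset.sum_congr rfl e, hR, MR hg hq hqbar hcomp (g * (X * q)) n k]
    rw [show (g * (X * q)) * ((q⁻¹ * g⁻¹) * (X * q⁻¹)^k)
        = (g * g⁻¹) * ((q * q⁻¹) * (X * (X * q⁻¹)^k)) by ring, hgg, hqq, one_mul, one_mul]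
  have Mtri : ∀ {n k : ℕ}, n < k → M n k = 0 := by
    intro n k h; rw [hM]; exact riordan_tri _ _ h
  have Rtri : ∀ {n k : ℕ}, n < k → R n k = 0 := by
    intro n k h; rw [hR]; exact riordan_tri _ _ h
  have Mdiag : ∀ n, M n n = 1 := by
    intro n; rw [hM, riordan_diag, hg, hq, one_pow, one_mul]
  have Ptri : ∀ j, ∀ c, j + 2 < c → P j c = 0 := by
    intro j
    induction j using Nat.strong_induction_on with
    | _ j ih =>
      intro c hc
      have h1 := hP j c
      rw [Finset.sum_range_succ] at h1
      have h2 : ∀ i ∈ range j, M j i * P i c = 0 := by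
        intro i hi
        rw [Finset.mem_range] at hi
        rw [ih i hi c (by omega), mul_zero]
      rw [Finset.sum_eq_zero h2, zero_add, Mdiag j, one_mul] at h1
      rw [h1]
      exact Mtri (by omega)
  have Ttri : ∀ n, ∀ i, n < i → T n i = 0 := by
    intro n
    induction n with
    | zero => intro i hi; rw [hT0 i, if_neg (by omega)]
    | succ n ih =>
      intro i hi
      rw [hT n i]
      apply Finset.sum_eq_zero
      intro j hj
      rw [Finset.mem_range] at hj
      rcases Nat.lt_or_ge j (n+1) with h | h
      · rw [Ptri j (i+1) (by omega), mul_zero]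
      · have hj1 : j = n+1 := by omega
        rw [hj1, ih (n+1) (by omega), zero_mul]
  have star : ∀ j k, ∑ m ∈ range (j+2), P j (m+1) * R m k
      = if k = 0 then 0 else R j (k-1) := by
    intro j0 k0
    have key : ∀ n, ∑ j ∈ range (n+1), M n j *
        ((∑ m ∈ range (j+2), P j (m+1) * R m k0)
          - (if k0 = 0 then 0 else R j (k0-1))) = 0 := by
      intro n
      have e1 : ∀ j ∈ range (n+1),
          M n j * ((∑ m ∈ range (j+2), P j (m+1) * R m k0)
            - (if k0 = 0 then 0 else R j (k0-1)))
          = (∑ m ∈ range (n+2), M n j * (P j (m+1) * R m k0))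
            - M n j * (if k0 = 0 then 0 else R j (k0-1)) := by
        intro j hj
        rw [Finset.mem_range] at hj
        rw [mul_sub]
        congr 1
        rw [Finset.mul_sum]
        apply Finset.sum_subset
        · intro x hx
          rw [Finset.mem_range] at *
          omega
        · intro x hx hx'
          rw [Finset.mem_range] at hx hx'
          rw [Ptri j (x+1) (by omega), zero_mul, mul_zero]
      rw [Finset.sum_congr rfl e1, Finset.sum_sub_distrib]
      have eA : ∑ j ∈ range (n+1), ∑ m ∈ range (n+2), M n j * (P j (m+1) * R m k0)
          = coeff (n+2) (X * (X * q⁻¹) ^ k0) := by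
        rw [Finset.sum_comm]
        have e2 : ∀ m ∈ range (n+2), ∑ j ∈ range (n+1), M n j * (P j (m+1) * R m k0)
            = M (n+2) (m+1) * R m k0 := by
          intro m _
          have e2' : ∀ j ∈ range (n+1), M n j * (P j (m+1) * R m k0)
              = (M n j * P j (m+1)) * R m k0 := by intro j _; ring
          rw [Finset.sum_congr rfl e2', ← Finset.sum_mul, hP n (m+1)]
        rw [Finset.sum_congr rfl e2]
        have e3 : ∑ m ∈ range (n+2), M (n+2) (m+1) * R m k0
            = ∑ m ∈ range (n+3), M (n+2) (m+1) * R m k0 := by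
          symm
          rw [Finset.sum_range_succ, Mtri (show n+2 < n+2+1 by omega), zero_mul, add_zero]
        rw [e3]
        exact MRgf (n+2) k0
      have eB : ∑ j ∈ range (n+1), M n j * (if k0 = 0 then 0 else R j (k0-1))
          = coeff (n+2) (X * (X * q⁻¹) ^ k0) := by
        rcases k0 with _ | k1
        · rw [pow_zero, mul_one, PowerSeries.coeff_X, if_neg (by omega)]
          simp
        · simp only [Nat.succ_ne_zero, if_false, Nat.succ_sub_one]
          rw [MRg n k1]
          rw [show (X : PowerSeries ℚ) * (X * q⁻¹)^(k1+1)
              = X * (X * (q⁻¹ * (X * q⁻¹)^k1)) by ring]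
          rw [show n+2 = (n+1)+1 from rfl, PowerSeries.coeff_succ_X_mul,
              PowerSeries.coeff_succ_X_mul]
      rw [eA, eB, sub_self]
    rw [hM] at key
    have hv := M_cancel hg hq _ key j0
    have := sub_eq_zero.mp hv
    exact this
  intro n
  induction n with
  | zero =>
    intro k
    rw [Finset.sum_range_one, hT0 0, if_pos rfl, one_mul]
    rcases Nat.eq_zero_or_pos k with rfl | hk
    · rw [if_pos rfl, hR, riordan_diag, pow_zero, mul_one, map_mul, hqbar, one_mul,
          PowerSeries.constantCoeff_inv, constantCoeff_psSubst (by simp), hg, inv_one]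
    · rw [Rtri hk, if_neg (by omega)]
  | succ n ih =>
    intro k
    have e1 : ∀ j ∈ range (n+2), T (n+1) j * R j k
        = ∑ i ∈ range (n+2), T n i * (P i (j+1) * R j k) := by
      intro j _
      rw [hT n j, Finset.sum_mul]
      apply Finset.sum_congr rfl
      intro i _
      ring
    rw [Finset.sum_congr rfl e1, Finset.sum_comm]
    have e2 : ∀ i ∈ range (n+2), ∑ j ∈ range (n+2), T n i * (P i (j+1) * R j k)
        = T n i * (if k = 0 then 0 else R i (k-1)) := by
      intro i hi
      rw [Finset.mem_range] at hi
      rcases Nat.lt_or_ge i (n+1) with h | h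
      · rw [← Finset.mul_sum]
        congr 1
        have e3 : ∑ j ∈ range (n+2), P i (j+1) * R j k
            = ∑ j ∈ range (i+2), P i (j+1) * R j k := by
          symm
          apply Finset.sum_subset
          · intro x hx; rw [Finset.mem_range] at *; omega
          · intro x hx hx'
            rw [Finset.mem_range] at hx hx'
            rw [Ptri i (x+1) (by omega), zero_mul]
        rw [e3, star i k]
      · have hi1 : i = n+1 := by omega
        rw [hi1, Ttri n (n+1) (by omega), zero_mul]
        simp
    rw [Finset.sum_congr rfl e2]
    rcases k with _ | k1
    · rw [if_neg (by omega)]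
      simp
    · simp only [Nat.succ_ne_zero, if_false, Nat.succ_sub_one]
      rw [Finset.sum_range_succ, Ttri n (n+1) (by omega), zero_mul, add_zero, ih k1]
      by_cases h : n = k1
      · rw [if_pos h, if_pos (by omega)]
      · rw [if_neg h, if_neg (by omega)]
end

section
/- Let g, f be formal power series over ℚ with g(0) = 1 and f = X·q where q(0) = 1, let M be the Riordan matrix of (g, f), let f̄ = X·q̄ (q̄(0) = 1) be the compositional inverse of f, and let P be the unique matrix with ∑_{j=0}^{n} M_{n,j}·P_{j,k} = M_{n+2,k} for all n, k. Then for every k ≥ 2, the generating function of column k of P satisfies q̄²·(∑_{n≥0} P_{n,k}X^n) = X^{k−2}. (Equivalently, the A-sequence of the second production matrix of M has generating function X²/f̄².) -/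
open PowerSeries Finset

namespace Aux

lemma coeff_psSubst (a f : PowerSeries ℚ) (n : ℕ) :
    coeff n (psSubst a f) = ∑ i ∈ range (n+1), coeff i f * coeff n (a^i) := by
  simp [psSubst, coeff_mk, map_sum]

lemma coeff_pow_eq_zero {a : PowerSeries ℚ} (ha : constantCoeff a = 0) {n i : ℕ}
    (h : n < i) : coeff n (a^i) = 0 := by
  have hX : (X : PowerSeries ℚ) ∣ a := X_dvd_iff.mpr ha
  have hd : (X : PowerSeries ℚ)^i ∣ a^i := pow_dvd_pow_of_dvd hX i
  exact (X_pow_dvd_iff.mp hd) n h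

lemma coeff_psSubst_of_lt (a f : PowerSeries ℚ) (ha : constantCoeff a = 0) {n m : ℕ}
    (h : n < m) :
    coeff n (psSubst a f) = ∑ i ∈ range m, coeff i f * coeff n (a^i) := by
  rw [coeff_psSubst]
  apply Finset.sum_subset
  · intro x hx; simp only [mem_range] at *; omega
  · intro x _ hnx
    simp only [mem_range, not_lt] at hnx
    rw [coeff_pow_eq_zero ha (by omega), mul_zero]

lemma coeff_eval₂ (a : PowerSeries ℚ) (ha : constantCoeff a = 0) (r : Polynomial ℚ)
    (n : ℕ) :
    coeff n (r.eval₂ C a) = ∑ i ∈ range (n+1), r.coeff i * coeff n (a^i) := by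
  rw [Polynomial.eval₂_eq_sum, Polynomial.sum, map_sum]
  simp only [map_mul, coeff_C_mul]
  rw [show (∑ i ∈ r.support, r.coeff i * coeff n (a^i))
      = ∑ i ∈ r.support ∪ range (n+1), r.coeff i * coeff n (a^i) from
    Finset.sum_subset Finset.subset_union_left (fun x _ hx => by
      rw [Polynomial.notMem_support_iff.mp hx, zero_mul])]
  exact (Finset.sum_subset Finset.subset_union_right (fun x hx hnx => by
    simp only [mem_range, not_lt] at hnx
    rw [coeff_pow_eq_zero ha (by omega), mul_zero])).symm

lemma coeff_psSubst_eq_eval₂_trunc (a f : PowerSeries ℚ) (ha : constantCoeff a = 0)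
    {n m : ℕ} (h : n < m) :
    coeff n (psSubst a f) = coeff n ((trunc m f).eval₂ C a) := by
  rw [coeff_eval₂ a ha, coeff_psSubst]
  refine Finset.sum_congr rfl fun i hi => ?_
  simp only [mem_range] at hi
  rw [coeff_trunc, if_pos (by omega)]

lemma trunc_mul_coeff (u v : PowerSeries ℚ) {n i : ℕ} (h : i ≤ n) :
    (trunc (n+1) u * trunc (n+1) v).coeff i = coeff i (u*v) := by
  rw [Polynomial.coeff_mul, PowerSeries.coeff_mul]
  refine Finset.sum_congr rfl fun p hp => ?_
  rw [Finset.HasAntidiagonal.mem_antidiagonal] at hp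
  rw [coeff_trunc, coeff_trunc, if_pos (by omega), if_pos (by omega)]

lemma psSubst_mul (a u v : PowerSeries ℚ) (ha : constantCoeff a = 0) :
    psSubst a (u*v) = psSubst a u * psSubst a v := by
  ext n
  have h1 : coeff n (psSubst a (u*v))
      = coeff n ((trunc (n+1) u * trunc (n+1) v).eval₂ C a) := by
    rw [coeff_psSubst, coeff_eval₂ a ha]
    refine Finset.sum_congr rfl fun i hi => ?_
    rw [trunc_mul_coeff u v (by simp only [mem_range] at hi; omega)]
  rw [h1, Polynomial.eval₂_mul, PowerSeries.coeff_mul, PowerSeries.coeff_mul]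
  refine Finset.sum_congr rfl fun p hp => ?_
  rw [Finset.HasAntidiagonal.mem_antidiagonal] at hp
  rw [← coeff_psSubst_eq_eval₂_trunc a u ha (show p.1 < n+1 by omega),
      ← coeff_psSubst_eq_eval₂_trunc a v ha (show p.2 < n+1 by omega)]

lemma psSubst_C (a : PowerSeries ℚ) (c : ℚ) : psSubst a (C c) = C c := by
  ext n
  rw [coeff_psSubst]
  rcases n with _ | n
  · simp
  · rw [Finset.sum_eq_zero, coeff_C, if_neg (by omega)]
    intro i hi
    rcases Nat.eq_zero_or_pos i with rfl | hpos
    · simp [coeff_one]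
    · rw [coeff_C, if_neg (by omega), zero_mul]

lemma psSubst_one (a : PowerSeries ℚ) : psSubst a 1 = 1 := by
  simpa using psSubst_C a 1

lemma psSubst_X (a : PowerSeries ℚ) (ha : constantCoeff a = 0) : psSubst a X = a := by
  ext n
  rw [coeff_psSubst]
  rcases n with _ | n
  · simpa [coeff_X] using ha.symm
  · rw [Finset.sum_eq_single 1]
    · simp
    · intro i _ hne; rw [coeff_X, if_neg hne, zero_mul]
    · intro h; exact absurd (by simp only [mem_range]; omega) h

lemma psSubst_X' (f : PowerSeries ℚ) : psSubst X f = f := by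
  ext n
  rw [coeff_psSubst, Finset.sum_eq_single n]
  · rw [coeff_X_pow, if_pos rfl, mul_one]
  · intro i _ hne; rw [coeff_X_pow, if_neg (Ne.symm hne), mul_zero]
  · intro h; exact absurd (by simp only [mem_range]; omega) h

lemma psSubst_sum (a : PowerSeries ℚ) {ι : Type*} (s : Finset ι)
    (F : ι → PowerSeries ℚ) :
    psSubst a (∑ i ∈ s, F i) = ∑ i ∈ s, psSubst a (F i) := by
  ext n
  rw [coeff_psSubst, map_sum]
  simp only [coeff_psSubst, map_sum, Finset.sum_mul]
  exact Finset.sum_comm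

lemma psSubst_pow (a u : PowerSeries ℚ) (ha : constantCoeff a = 0) (m : ℕ) :
    psSubst a (u^m) = (psSubst a u)^m := by
  induction m with
  | zero => simpa using psSubst_one a
  | succ m ih => rw [pow_succ, psSubst_mul a _ _ ha, ih, pow_succ]

lemma constantCoeff_psSubst (a f : PowerSeries ℚ) :
    constantCoeff (psSubst a f) = constantCoeff f := by
  have h := coeff_psSubst a f 0
  simpa using h

lemma psSubst_eval₂ (a b : PowerSeries ℚ) (hb : constantCoeff b = 0)
    (r : Polynomial ℚ) :
    psSubst b (r.eval₂ C a) = r.eval₂ C (psSubst b a) := by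
  rw [Polynomial.eval₂_eq_sum, Polynomial.eval₂_eq_sum, Polynomial.sum, Polynomial.sum,
    psSubst_sum]
  refine Finset.sum_congr rfl fun i _ => ?_
  rw [psSubst_mul b _ _ hb, psSubst_C, psSubst_pow b a hb]

lemma psSubst_assoc (a b p : PowerSeries ℚ) (ha : constantCoeff a = 0)
    (hb : constantCoeff b = 0) :
    psSubst b (psSubst a p) = psSubst (psSubst b a) p := by
  have hc : constantCoeff (psSubst b a) = 0 := by rw [constantCoeff_psSubst]; exact ha
  ext n
  rw [coeff_psSubst, Finset.sum_congr rfl (fun i hi =>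
    by rw [coeff_psSubst_eq_eval₂_trunc a p ha
      (show i < n+1 by simp only [mem_range] at hi; omega)]),
    ← coeff_psSubst, psSubst_eval₂ a b hb, coeff_eval₂ _ hc, coeff_psSubst]
  refine Finset.sum_congr rfl fun i hi => ?_
  rw [coeff_trunc, if_pos (by simp only [mem_range] at hi; omega)]

end Aux

theorem second_production_matrix_A_sequence
    (g q qbar : PowerSeries ℚ)
    (hg : constantCoeff g = 1) (hq : constantCoeff q = 1)
    (hqbar : constantCoeff qbar = 1)
    (hcomp : psSubst (X * qbar) (X * q) = X)
    (P : ℕ → ℕ → ℚ)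
    (hP : ∀ n k, ∑ j ∈ range (n + 1), riordan g (X * q) n j * P j k
          = riordan g (X * q) (n + 2) k) :
    ∀ k, 2 ≤ k → qbar ^ 2 * PowerSeries.mk (fun n => P n k) = X ^ (k - 2) := by
  intro k hk
  obtain ⟨m, rfl⟩ : ∃ m, k = m + 2 := ⟨k - 2, by omega⟩
  set f := (X : PowerSeries ℚ) * q with hfdef
  set fb := (X : PowerSeries ℚ) * qbar with hfbdef
  have hf0 : constantCoeff f = 0 := by simp [hfdef]
  have hfb0 : constantCoeff fb = 0 := by simp [hfbdef]
  set p := PowerSeries.mk (fun n => P n (m+2)) with hpdef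
  -- Step 1
  have step1 : ∀ n, coeff n (g * psSubst f p) = coeff (n+2) (g * f^(m+2)) := by
    intro n
    have e1 : ∀ pr ∈ antidiagonal n, coeff pr.1 g * coeff pr.2 (psSubst f p)
        = ∑ i ∈ range (n+1), coeff pr.1 g * (coeff i p * coeff pr.2 (f^i)) := by
      intro pr hpr
      rw [Finset.HasAntidiagonal.mem_antidiagonal] at hpr
      rw [Aux.coeff_psSubst_of_lt f p hf0 (show pr.2 < n+1 by omega), Finset.mul_sum]
    have h2 : ∀ i ∈ range (n+1),
        (∑ pr ∈ antidiagonal n, coeff pr.1 g * (coeff i p * coeff pr.2 (f^i)))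
        = riordan g f n i * P i (m+2) := by
      intro i _
      rw [riordan, PowerSeries.coeff_mul, Finset.sum_mul]
      refine Finset.sum_congr rfl fun pr _ => ?_
      rw [hpdef, coeff_mk]
      ring
    calc coeff n (g * psSubst f p)
        = ∑ pr ∈ antidiagonal n, coeff pr.1 g * coeff pr.2 (psSubst f p) :=
          PowerSeries.coeff_mul n _ _
      _ = ∑ pr ∈ antidiagonal n, ∑ i ∈ range (n+1),
            coeff pr.1 g * (coeff i p * coeff pr.2 (f^i)) :=
          Finset.sum_congr rfl e1
      _ = ∑ i ∈ range (n+1), ∑ pr ∈ antidiagonal n,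
            coeff pr.1 g * (coeff i p * coeff pr.2 (f^i)) := Finset.sum_comm
      _ = ∑ i ∈ range (n+1), riordan g f n i * P i (m+2) := Finset.sum_congr rfl h2
      _ = riordan g f (n+2) (m+2) := hP n (m+2)
      _ = coeff (n+2) (g * f^(m+2)) := rfl
  have hgf : g * f^(m+2) = (g * (X^m * q^(m+2))) * X^2 := by
    rw [hfdef, mul_pow, pow_add]
    ring
  have step2 : g * psSubst f p = g * (X^m * q^(m+2)) := by
    ext n
    rw [step1 n, hgf, PowerSeries.coeff_mul_X_pow]
  have hg0 : g ≠ 0 := fun h => by simp [h] at hg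
  have step3 : psSubst f p = X^m * q^(m+2) := mul_left_cancel₀ hg0 step2
  have step4 : p = psSubst fb (X^m * q^(m+2)) := by
    have h := congrArg (psSubst fb) step3
    rwa [Aux.psSubst_assoc f fb p hf0 hfb0, hcomp, Aux.psSubst_X' p] at h
  set Q := psSubst fb q with hQdef
  have hQ1 : qbar * Q = 1 := by
    have h1 : psSubst fb f = fb * Q := by
      rw [hfdef, Aux.psSubst_mul fb X q hfb0, Aux.psSubst_X fb hfb0, hQdef]
    rw [hcomp, hfbdef] at h1
    have h2 : (X : PowerSeries ℚ) * 1 = X * (qbar * Q) := by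
      rw [mul_one]; conv_lhs => rw [h1]
      ring
    exact (mul_left_cancel₀ PowerSeries.X_ne_zero h2).symm
  have step5 : p = X^m * qbar^m * Q^(m+2) := by
    rw [step4, Aux.psSubst_mul fb _ _ hfb0, Aux.psSubst_pow fb X hfb0,
      Aux.psSubst_pow fb q hfb0, Aux.psSubst_X fb hfb0, ← hQdef, hfbdef]
    ring
  show qbar^2 * p = X^(m+2-2)
  have hm : m + 2 - 2 = m := by omega
  rw [hm, step5]
  calc qbar^2 * (X^m * qbar^m * Q^(m+2)) = X^m * (qbar*Q)^(m+2) := by ring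
    _ = X^m := by rw [hQ1, one_pow, mul_one]
end

section
/- Let w be a formal power series over ℚ with w(0) = 0 satisfying w·(1−w)² = X (so w is the compositional inverse of X(1−X)²). Then for all natural numbers n, k with k ≤ n, the coefficient of X^{n+1} in w^{k+1} satisfies (3n−k+2)·[X^{n+1}](w^{k+1}) = (2k+2)·C(3n−k+2, n−k), where C(a,b) denotes the binomial coefficient. Consequently the entries of the inverse of the Riordan matrix of ((1−X)², X(1−X)²) are (2k+2)/(3n−k+2)·C(3n−k+2, n−k). -/
set_option maxHeartbeats 1000000

lemma choose_identity (k s : ℕ) :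
    (2*(k:ℚ)+2) * (Nat.choose (2*k+3*s+8) (s+2) : ℚ) / (2*(k:ℚ)+3*s+8)
      = 2*(k:ℚ) * (Nat.choose (2*k+3*s+6) (s+2) : ℚ) / (2*(k:ℚ)+3*s+6)
      + 2 * ((2*(k:ℚ)+4) * (Nat.choose (2*k+3*s+7) (s+1) : ℚ) / (2*(k:ℚ)+3*s+7))
      - (2*(k:ℚ)+6) * (Nat.choose (2*k+3*s+6) s : ℚ) / (2*(k:ℚ)+3*s+6) := by
  have c1 : ((2*k+3*s+8).choose (s+2) : ℚ)
      = Nat.factorial (2*k+3*s+8) / (Nat.factorial (s+2) * Nat.factorial (2*k+2*s+6)) := by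
    rw [Nat.cast_choose ℚ (by omega), show 2*k+3*s+8 - (s+2) = 2*k+2*s+6 by omega]
  have c2 : ((2*k+3*s+6).choose (s+2) : ℚ)
      = Nat.factorial (2*k+3*s+6) / (Nat.factorial (s+2) * Nat.factorial (2*k+2*s+4)) := by
    rw [Nat.cast_choose ℚ (by omega), show 2*k+3*s+6 - (s+2) = 2*k+2*s+4 by omega]
  have c3 : ((2*k+3*s+7).choose (s+1) : ℚ)
      = Nat.factorial (2*k+3*s+7) / (Nat.factorial (s+1) * Nat.factorial (2*k+2*s+6)) := by
    rw [Nat.cast_choose ℚ (by omega), show 2*k+3*s+7 - (s+1) = 2*k+2*s+6 by omega]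
  have c4 : ((2*k+3*s+6).choose s : ℚ)
      = Nat.factorial (2*k+3*s+6) / (Nat.factorial s * Nat.factorial (2*k+2*s+6)) := by
    rw [Nat.cast_choose ℚ (by omega), show 2*k+3*s+6 - s = 2*k+2*s+6 by omega]
  have f1 : (Nat.factorial (2*k+3*s+8) : ℚ) = (2*(k:ℚ)+3*s+8) * ((2*(k:ℚ)+3*s+7) * (Nat.factorial (2*k+3*s+6) : ℚ)) := by
    rw [show 2*k+3*s+8 = (2*k+3*s+6)+1+1 by omega, Nat.factorial_succ, Nat.factorial_succ]
    push_cast; ring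
  have f2 : (Nat.factorial (2*k+3*s+7) : ℚ) = (2*(k:ℚ)+3*s+7) * (Nat.factorial (2*k+3*s+6) : ℚ) := by
    rw [show 2*k+3*s+7 = (2*k+3*s+6)+1 by omega, Nat.factorial_succ]
    push_cast; ring
  have f3 : (Nat.factorial (s+2) : ℚ) = ((s:ℚ)+2) * (((s:ℚ)+1) * (Nat.factorial s : ℚ)) := by
    rw [show s+2 = s+1+1 by omega, Nat.factorial_succ, Nat.factorial_succ]
    push_cast; ring
  have f4 : (Nat.factorial (s+1) : ℚ) = ((s:ℚ)+1) * (Nat.factorial s : ℚ) := by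
    rw [Nat.factorial_succ]; push_cast; ring
  have f5 : (Nat.factorial (2*k+2*s+6) : ℚ) = (2*(k:ℚ)+2*s+6) * ((2*(k:ℚ)+2*s+5) * (Nat.factorial (2*k+2*s+4) : ℚ)) := by
    rw [show 2*k+2*s+6 = (2*k+2*s+4)+1+1 by omega, Nat.factorial_succ, Nat.factorial_succ]
    push_cast; ring
  rw [c1, c2, c3, c4, f1, f2, f3, f4, f5]
  have hF : (Nat.factorial (2*k+3*s+6) : ℚ) ≠ 0 := Nat.cast_ne_zero.mpr (Nat.factorial_ne_zero _)
  have hG : (Nat.factorial s : ℚ) ≠ 0 := Nat.cast_ne_zero.mpr (Nat.factorial_ne_zero _)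
  have hH : (Nat.factorial (2*k+2*s+4) : ℚ) ≠ 0 := Nat.cast_ne_zero.mpr (Nat.factorial_ne_zero _)
  have h1 : (2*(k:ℚ)+3*s+8) ≠ 0 := by positivity
  have h2 : (2*(k:ℚ)+3*s+7) ≠ 0 := by positivity
  have h3 : (2*(k:ℚ)+3*s+6) ≠ 0 := by positivity
  have h4 : ((s:ℚ)+2) ≠ 0 := by positivity
  have h5 : ((s:ℚ)+1) ≠ 0 := by positivity
  have h6 : (2*(k:ℚ)+2*s+6) ≠ 0 := by positivity
  have h7 : (2*(k:ℚ)+2*s+5) ≠ 0 := by positivity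
  generalize hFv : (Nat.factorial (2*k+3*s+6) : ℚ) = F at *
  generalize hGv : (Nat.factorial s : ℚ) = G at *
  generalize hHv : (Nat.factorial (2*k+2*s+4) : ℚ) = H at *
  generalize hKv : (k:ℚ) = K at *
  generalize hSv : (s:ℚ) = S at *
  field_simp
  have h6' : 2 * (K + S) + 6 ≠ 0 := by rw [mul_add]; exact h6
  have h7' : 2 * (K + S) + 5 ≠ 0 := by rw [mul_add]; exact h7
  field_simp
  ring

open PowerSeries Finset

lemma coeff_w_pow_of_lt (w : PowerSeries ℚ) (hw0 : constantCoeff w = 0)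
    {m j : ℕ} (h : m < j) : PowerSeries.coeff m (w ^ j) = 0 := by
  have hX : (X : PowerSeries ℚ) ∣ w := PowerSeries.X_dvd_iff.mpr hw0
  have hd : (X : PowerSeries ℚ) ^ j ∣ w ^ j := pow_dvd_pow_of_dvd hX j
  exact PowerSeries.X_pow_dvd_iff.mp hd m h

lemma coeff_w_pow_diag (w : PowerSeries ℚ) (hw0 : constantCoeff w = 0)
    (hw : w * (1 - w) ^ 2 = X) (n : ℕ) : PowerSeries.coeff n (w ^ n) = 1 := by
  obtain ⟨q, hq⟩ := PowerSeries.X_dvd_iff.mpr hw0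
  have hq1 : q * (1 - X * q) ^ 2 = 1 := by
    apply mul_left_cancel₀ (PowerSeries.X_ne_zero (R := ℚ))
    rw [mul_one]
    calc X * (q * (1 - X * q) ^ 2) = (X * q) * (1 - X * q) ^ 2 := by ring
    _ = w * (1 - w) ^ 2 := by rw [← hq]
    _ = X := hw
  have hc : constantCoeff q = 1 := by
    have := congrArg (constantCoeff) hq1
    simpa using this
  rw [hq, mul_pow, PowerSeries.coeff_X_pow_mul' (q ^ n) n n]
  simp [hc]

lemma coeff_formula (w : PowerSeries ℚ) (hw0 : constantCoeff w = 0)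
    (hw : w * (1 - w) ^ 2 = X) :
    ∀ m n k : ℕ, k ≤ n → n + (n - k) ≤ m →
      PowerSeries.coeff (n + 1) (w ^ (k + 1))
        = (2 * (k : ℚ) + 2) * (Nat.choose (3 * n - k + 2) (n - k) : ℚ) / (3 * (n : ℚ) - k + 2) := by
  intro m
  induction m with
  | zero =>
    intro n k hk hm
    have hn : n = 0 := by omega
    have hk0 : k = 0 := by omega
    subst hn; subst hk0
    rw [coeff_w_pow_diag w hw0 hw 1]
    norm_num
  | succ m ih =>
    intro n k hk hm
    rcases eq_or_lt_of_le hk with heq | hlt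
    · -- diagonal case k = n
      subst heq
      rw [coeff_w_pow_diag w hw0 hw (k + 1)]
      rw [show 3 * k - k + 2 = 2 * k + 2 by omega, Nat.sub_self, Nat.choose_zero_right]
      have : (3 * (k:ℚ) - k + 2) = 2 * k + 2 := by ring
      rw [this]
      have h2 : (2 * (k:ℚ) + 2) ≠ 0 := by positivity
      field_simp
      simp
    · -- k < n
      have hrec : w ^ (k + 1) = X * w ^ k + (w ^ (k + 2) + w ^ (k + 2)) - w ^ (k + 3) := by
        have hw' : w = X + (w ^ 2 + w ^ 2) - w ^ 3 := by linear_combination hw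
        calc w ^ (k + 1) = w ^ k * w := by ring
        _ = w ^ k * (X + (w ^ 2 + w ^ 2) - w ^ 3) := by rw [← hw']
        _ = X * w ^ k + (w ^ (k + 2) + w ^ (k + 2)) - w ^ (k + 3) := by ring
      have hcoeff : PowerSeries.coeff (n + 1) (w ^ (k + 1))
          = PowerSeries.coeff n (w ^ k)
            + (PowerSeries.coeff (n + 1) (w ^ (k + 2)) + PowerSeries.coeff (n + 1) (w ^ (k + 2)))
            - PowerSeries.coeff (n + 1) (w ^ (k + 3)) := by
        rw [hrec, map_sub, map_add, map_add, PowerSeries.coeff_succ_X_mul]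
      -- first term
      have hT : PowerSeries.coeff n (w ^ k)
          = 2 * (k : ℚ) * (Nat.choose (3 * n - k) (n - k) : ℚ) / (3 * (n : ℚ) - k) := by
        rcases Nat.eq_zero_or_pos k with hk0 | hkpos
        · subst hk0
          have hn1 : n ≠ 0 := by omega
          simp [PowerSeries.coeff_one, hn1]
        · obtain ⟨k', rfl⟩ : ∃ k', k = k' + 1 := ⟨k - 1, by omega⟩
          obtain ⟨n', rfl⟩ : ∃ n', n = n' + 1 := ⟨n - 1, by omega⟩
          rw [ih n' k' (by omega) (by omega)]
          rw [show 3 * n' - k' + 2 = 3 * (n' + 1) - (k' + 1) by omega,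
            show n' - k' = (n' + 1) - (k' + 1) by omega]
          push_cast
          ring
      -- second term
      have hT2 : PowerSeries.coeff (n + 1) (w ^ (k + 2))
          = (2 * ((k:ℚ) + 1) + 2) * (Nat.choose (3 * n - (k + 1) + 2) (n - (k + 1)) : ℚ)
            / (3 * (n : ℚ) - (k + 1) + 2) := by
        have := ih n (k + 1) (by omega) (by omega)
        rw [show ((k:ℚ) + 1) = ((k + 1 : ℕ) : ℚ) by push_cast; ring]
        exact this
      rcases eq_or_lt_of_le (show k + 1 ≤ n by omega) with heq1 | hlt2
      · -- k + 1 = n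
        have hT3 : PowerSeries.coeff (n + 1) (w ^ (k + 3)) = 0 :=
          coeff_w_pow_of_lt w hw0 (by omega)
        subst heq1
        rw [hcoeff, hT, hT2, hT3]
        rw [show 3 * (k + 1) - k + 2 = 2 * k + 5 by omega, show (k + 1) - k = 1 by omega,
          show 3 * (k + 1) - k = 2 * k + 3 by omega,
          show 3 * (k + 1) - (k + 1) + 2 = 2 * k + 4 by omega, Nat.sub_self,
          Nat.choose_one_right, Nat.choose_one_right, Nat.choose_zero_right]
        have e1 : (3 * ((k + 1 : ℕ) : ℚ) - k + 2) = 2 * (k:ℚ) + 5 := by push_cast; ring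
        have e2 : (3 * ((k + 1 : ℕ) : ℚ) - k) = 2 * (k:ℚ) + 3 := by push_cast; ring
        have e3 : (3 * ((k + 1 : ℕ) : ℚ) - ((k:ℚ) + 1) + 2) = 2 * (k:ℚ) + 4 := by push_cast; ring
        rw [e1, e2, e3]
        push_cast
        have h1 : (2 * (k:ℚ) + 5) ≠ 0 := by positivity
        have h2 : (2 * (k:ℚ) + 3) ≠ 0 := by positivity
        have h3 : (2 * (k:ℚ) + 4) ≠ 0 := by positivity
        field_simp
        ring
      · -- k + 2 ≤ n
        obtain ⟨s, rfl⟩ : ∃ s, n = k + 2 + s := ⟨n - k - 2, by omega⟩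
        have hT3 : PowerSeries.coeff (k + 2 + s + 1) (w ^ (k + 3))
            = (2 * ((k:ℚ) + 2) + 2) * (Nat.choose (2 * k + 3 * s + 6) s : ℚ)
              / (2 * (k:ℚ) + 3 * s + 6) := by
          have := ih (k + 2 + s) (k + 2) (by omega) (by omega)
          rw [show w ^ (k + 3) = w ^ ((k + 2) + 1) by ring_nf] at this
          rw [this, show 3 * (k + 2 + s) - (k + 2) + 2 = 2 * k + 3 * s + 6 by omega,
            show (k + 2 + s) - (k + 2) = s by omega]
          push_cast
          ring_nf
        rw [hcoeff, hT, hT2, hT3,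
          show 3 * (k + 2 + s) - k + 2 = 2 * k + 3 * s + 8 by omega,
          show (k + 2 + s) - k = s + 2 by omega,
          show 3 * (k + 2 + s) - k = 2 * k + 3 * s + 6 by omega,
          show 3 * (k + 2 + s) - (k + 1) + 2 = 2 * k + 3 * s + 7 by omega,
          show (k + 2 + s) - (k + 1) = s + 1 by omega]
        have e1 : (3 * ((k + 2 + s : ℕ) : ℚ) - k + 2) = 2 * (k:ℚ) + 3 * s + 8 := by push_cast; ring
        have e2 : (3 * ((k + 2 + s : ℕ) : ℚ) - k) = 2 * (k:ℚ) + 3 * s + 6 := by push_cast; ring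
        have e3 : (3 * ((k + 2 + s : ℕ) : ℚ) - (k + 1) + 2) = 2 * (k:ℚ) + 3 * s + 7 := by push_cast; ring
        rw [e1, e2, e3]
        have := choose_identity k s
        linear_combination -this


lemma Mtri (j i : ℕ) (h : j < i) : riordan ((1 - X) ^ 2) (X * (1 - X) ^ 2) j i = 0 := by
  unfold riordan
  have hre : (1 - X : PowerSeries ℚ) ^ 2 * (X * (1 - X) ^ 2) ^ i
      = X ^ i * ((1 - X) ^ 2 * ((1 - X) ^ 2) ^ i) := by rw [mul_pow]; ring
  rw [hre, PowerSeries.coeff_X_pow_mul', if_neg (by omega)]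

lemma key_inv (w : PowerSeries ℚ) (hw0 : constantCoeff w = 0)
    (hw : w * (1 - w) ^ 2 = X) (n k : ℕ) :
    ∑ j ∈ range (n + 1),
        PowerSeries.coeff (n + 1) (w ^ (j + 1)) * riordan ((1 - X) ^ 2) (X * (1 - X) ^ 2) j k
      = if n = k then 1 else 0 := by
  classical
  set p : Polynomial ℚ := (1 - Polynomial.X) ^ 2 * (Polynomial.X * (1 - Polynomial.X) ^ 2) ^ k with hp
  have hpc : (p : PowerSeries ℚ) = (1 - X) ^ 2 * (X * (1 - X) ^ 2) ^ k := by
    rw [hp]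
    simp only [Polynomial.coe_mul, Polynomial.coe_pow, Polynomial.coe_sub, Polynomial.coe_one,
      Polynomial.coe_X]
  set L := max (n + 1) (p.natDegree + 1) with hL
  have hstep1 : (∑ j ∈ range (n + 1),
        PowerSeries.coeff (n + 1) (w ^ (j + 1)) * riordan ((1 - X) ^ 2) (X * (1 - X) ^ 2) j k)
      = ∑ j ∈ range L,
        PowerSeries.coeff (n + 1) (w ^ (j + 1)) * riordan ((1 - X) ^ 2) (X * (1 - X) ^ 2) j k := by
    apply Finset.sum_subset (Finset.range_subset_range.mpr (le_max_left _ _))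
    intro j hjL hjn
    have hj : n + 1 < j + 1 := by
      simp only [mem_range] at hjn; omega
    rw [coeff_w_pow_of_lt w hw0 hj, zero_mul]
  rw [hstep1]
  have hM : ∀ j, riordan ((1 - X) ^ 2) (X * (1 - X) ^ 2) j k = p.coeff j := by
    intro j
    unfold riordan
    rw [← hpc, Polynomial.coeff_coe]
  have hsum : ∑ j ∈ range L,
        PowerSeries.coeff (n + 1) (w ^ (j + 1)) * riordan ((1 - X) ^ 2) (X * (1 - X) ^ 2) j k
      = PowerSeries.coeff (n + 1) (∑ j ∈ range L, p.coeff j • w ^ (j + 1)) := by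
    rw [map_sum]
    refine Finset.sum_congr rfl fun j _ => ?_
    rw [hM j, map_smul, smul_eq_mul, mul_comm]
  have hser : (∑ j ∈ range L, p.coeff j • w ^ (j + 1)) = Polynomial.aeval w p * w := by
    rw [Polynomial.aeval_eq_sum_range' (lt_of_lt_of_le (Nat.lt_succ_self _) (le_max_right _ _)) w,
      Finset.sum_mul]
    exact Finset.sum_congr rfl fun j _ => by rw [smul_mul_assoc, ← pow_succ]
  have haeval : Polynomial.aeval w p = (1 - w) ^ 2 * (w * (1 - w) ^ 2) ^ k := by
    rw [hp]
    simp [map_mul, map_pow, map_sub, map_one]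
  have hXp : Polynomial.aeval w p * w = X ^ (k + 1) := by
    rw [haeval, hw]
    calc (1 - w) ^ 2 * X ^ k * w = X ^ k * (w * (1 - w) ^ 2) := by ring
    _ = X ^ k * X := by rw [hw]
    _ = X ^ (k + 1) := by ring
  rw [hsum, hser, hXp, PowerSeries.coeff_X_pow]
  by_cases h : n = k
  · simp [h]
  · rw [if_neg (by omega), if_neg h]

theorem inverse_entries_via_Lagrange
    (w : PowerSeries ℚ) (hw0 : constantCoeff w = 0)
    (hw : w * (1 - w) ^ 2 = X)
    (N : ℕ → ℕ → ℚ)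
    (hN1 : ∀ n k, ∑ j ∈ range (n + 1),
        riordan ((1 - X) ^ 2) (X * (1 - X) ^ 2) n j * N j k = if n = k then 1 else 0)
    (hN2 : ∀ n k, ∑ j ∈ range (n + 1),
        N n j * riordan ((1 - X) ^ 2) (X * (1 - X) ^ 2) j k = if n = k then 1 else 0) :
    (∀ n k : ℕ, k ≤ n →
      (3 * (n : ℚ) - k + 2) * PowerSeries.coeff (n + 1) (w ^ (k + 1))
        = (2 * (k : ℚ) + 2) * (Nat.choose (3 * n - k + 2) (n - k) : ℚ))
    ∧ ∀ n k : ℕ, k ≤ n →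
      N n k = (2 * (k : ℚ) + 2) / (3 * (n : ℚ) - k + 2)
        * (Nat.choose (3 * n - k + 2) (n - k) : ℚ) := by
  have hden : ∀ n k : ℕ, k ≤ n → (3 * (n : ℚ) - k + 2) ≠ 0 := by
    intro n k hk
    have h1 : (k : ℚ) ≤ 3 * n := by exact_mod_cast (by omega : k ≤ 3 * n)
    intro h0
    linarith
  constructor
  · intro n k hk
    rw [coeff_formula w hw0 hw (n + (n - k)) n k hk le_rfl]
    field_simp [hden n k hk]
  · intro n k hk
    have hNw : N n k = PowerSeries.coeff (n + 1) (w ^ (k + 1)) := by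
      have hS1 : ∀ j, j ≤ n → (∑ i ∈ range (n + 1),
          riordan ((1 - X) ^ 2) (X * (1 - X) ^ 2) j i * N i k) = if j = k then 1 else 0 := by
        intro j hj
        rw [← hN1 j k]
        refine (Finset.sum_subset (Finset.range_subset_range.mpr (by omega)) ?_).symm
        intro i hiL hij
        have : j < i := by simp only [mem_range] at hij; omega
        rw [Mtri j i this, zero_mul]
      calc N n k = ∑ i ∈ range (n + 1), (if n = i then (1:ℚ) else 0) * N i k := by
            symm
            simp only [ite_mul, one_mul, zero_mul, Finset.sum_ite_eq, mem_range]
            rw [if_pos (by omega)]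
      _ = ∑ i ∈ range (n + 1), (∑ j ∈ range (n + 1),
            PowerSeries.coeff (n + 1) (w ^ (j + 1))
              * riordan ((1 - X) ^ 2) (X * (1 - X) ^ 2) j i) * N i k := by
            refine Finset.sum_congr rfl fun i _ => ?_
            rw [key_inv w hw0 hw n i]
      _ = ∑ i ∈ range (n + 1), ∑ j ∈ range (n + 1),
            PowerSeries.coeff (n + 1) (w ^ (j + 1))
              * riordan ((1 - X) ^ 2) (X * (1 - X) ^ 2) j i * N i k := by
            simp_rw [Finset.sum_mul]
      _ = ∑ j ∈ range (n + 1), ∑ i ∈ range (n + 1),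
            PowerSeries.coeff (n + 1) (w ^ (j + 1))
              * riordan ((1 - X) ^ 2) (X * (1 - X) ^ 2) j i * N i k := Finset.sum_comm
      _ = ∑ j ∈ range (n + 1), PowerSeries.coeff (n + 1) (w ^ (j + 1))
              * ∑ i ∈ range (n + 1), riordan ((1 - X) ^ 2) (X * (1 - X) ^ 2) j i * N i k := by
            simp_rw [Finset.mul_sum, mul_assoc]
      _ = ∑ j ∈ range (n + 1), PowerSeries.coeff (n + 1) (w ^ (j + 1))
              * (if j = k then (1:ℚ) else 0) := by
            refine Finset.sum_congr rfl fun j hj => ?_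
            rw [hS1 j (by simp only [mem_range] at hj; omega)]
      _ = PowerSeries.coeff (n + 1) (w ^ (k + 1)) := by
            simp only [mul_ite, mul_one, mul_zero, Finset.sum_ite_eq', mem_range]
            rw [if_pos (by omega)]
    rw [hNw, coeff_formula w hw0 hw (n + (n - k)) n k hk le_rfl]
    ring
end

section
/- Let M be the ℕ×ℕ matrix with entries M_{n,k} = C(n+k, 2k) (the Riordan matrix of (1/(1−X), X/(1−X)²)), and let N be the inverse of the Riordan matrix of ((1−X)², X(1−X)²), a lower-triangular matrix over ℚ. Then for all n, k, the entries of the matrix product satisfy (N·M)_{n,k} = ∑_{i=0}^{n} (2i+2)/(3n+2−i)·C(3n+2−i, n−i)·C(i+k, 2k). -/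
open PowerSeries Finset

noncomputable def Gf (n j : ℕ) : ℚ :=
  (2 * (j : ℚ) + 2) / ((3 * n + 2 - j : ℕ) : ℚ) * (Nat.choose (3 * n + 2 - j) (n - j) : ℚ)

lemma coeff_one_sub_X_pow (M n : ℕ) :
    PowerSeries.coeff n ((1 - X) ^ M) = (-1) ^ n * (Nat.choose M n : ℚ) := by
  have h : ((1 - X : PowerSeries ℚ)) ^ M = ∑ i ∈ range (M + 1),
      PowerSeries.C ((-1 : ℚ) ^ i * (Nat.choose M i : ℚ)) * (X : PowerSeries ℚ) ^ i := by
    rw [sub_eq_add_neg, add_comm, add_pow]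
    apply Finset.sum_congr rfl
    intro i _
    rw [one_pow, mul_one, map_mul, map_pow, map_neg, map_one, map_natCast]
    ring
  rw [h, map_sum]
  simp only [PowerSeries.coeff_C_mul, PowerSeries.coeff_X_pow]
  rw [Finset.sum_eq_single n]
  · simp
  · intro b _ hb; simp [Ne.symm hb]
  · intro hn
    simp only [Finset.mem_range, not_lt] at hn
    simp [Nat.choose_eq_zero_of_lt (show M < n by omega)]

lemma vand (M : ℕ) : ∀ A m : ℕ, m + M ≤ A →
    ∑ i ∈ range (m + 1), (-1 : ℚ) ^ i * (Nat.choose M i : ℚ) *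
      (Nat.choose (A - i) (m - i) : ℚ) = (Nat.choose (A - M) m : ℚ) := by
  induction M with
  | zero =>
    intro A m hm
    rw [Finset.sum_eq_single 0]
    · simp
    · intro b _ hb
      simp [Nat.choose_eq_zero_of_lt (show 0 < b by omega)]
    · intro h; simp at h
  | succ M ih =>
    intro A m hm
    match m with
    | 0 => simp
    | m + 1 =>
      rw [Finset.sum_range_succ'] 
      have step : ∀ i ∈ range (m + 1),
          (-1 : ℚ) ^ (i+1) * (Nat.choose (M+1) (i+1) : ℚ) * (Nat.choose (A - (i+1)) (m + 1 - (i+1)) : ℚ)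
          = -((-1 : ℚ) ^ i * (Nat.choose M i : ℚ) * (Nat.choose ((A-1) - i) (m - i) : ℚ))
            + (-1 : ℚ)^(i+1) * (Nat.choose M (i+1) : ℚ) * (Nat.choose ((A-1) - i) (m - i) : ℚ) := by
        intro i _
        rw [Nat.choose_succ_succ M i]
        have e1 : A - (i+1) = (A-1) - i := by omega
        have e2 : m + 1 - (i+1) = m - i := by omega
        rw [e1, e2]
        push_cast
        ring
      rw [Finset.sum_congr rfl step, Finset.sum_add_distrib]
      have h1 : ∑ i ∈ range (m+1), -((-1 : ℚ) ^ i * (Nat.choose M i : ℚ) * (Nat.choose ((A-1) - i) (m - i) : ℚ))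
          = -(Nat.choose ((A-1) - M) m : ℚ) := by
        rw [← ih (A-1) m (by omega)]; rw [Finset.sum_neg_distrib]
      have h2 : (∑ i ∈ range (m+1), (-1 : ℚ)^(i+1) * (Nat.choose M (i+1) : ℚ) * (Nat.choose ((A-1) - i) (m - i) : ℚ))
          + (-1:ℚ)^0 * (Nat.choose (M+1) 0 : ℚ) * (Nat.choose (A - 0) (m+1-0) : ℚ)
          = ∑ i ∈ range (m+2), (-1 : ℚ)^i * (Nat.choose M i : ℚ) * (Nat.choose (A - i) (m + 1 - i) : ℚ) := by
        rw [Finset.sum_range_succ' (fun i => (-1 : ℚ)^i * (Nat.choose M i : ℚ) * (Nat.choose (A - i) (m + 1 - i) : ℚ)) (m+1)]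
        simp only [pow_zero, Nat.choose_zero_right, Nat.cast_one, one_mul, Nat.sub_zero]
        congr 1
        apply Finset.sum_congr rfl
        intro i _
        have e1 : A - (i+1) = (A-1) - i := by omega
        have e2 : m + 1 - (i+1) = m - i := by omega
        rw [e1, e2]
      rw [add_assoc, h1, h2, ih A (m+1) (by omega)]
      have : A - M = (A - (M+1)) + 1 := by omega
      rw [this, Nat.choose_succ_succ]
      have : (A - 1) - M = A - (M+1) := by omega
      rw [this]
      push_cast
      ring

lemma choose_3m (m : ℕ) : Nat.choose (3*m+2) (m+1) = 2 * Nat.choose (3*m+2) m := by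
  have h := Nat.choose_succ_right_eq (3*m+2) m
  have hm : 3*m+2 - m = 2*(m+1) := by omega
  rw [hm] at h
  apply Nat.eq_of_mul_eq_mul_right (show 0 < m+1 by omega)
  rw [h]; ring

lemma sub_mul_choose (a b : ℕ) (hb : b ≤ a) :
    (a - b) * Nat.choose a b = a * Nat.choose (a-1) b := by
  rcases Nat.eq_or_lt_of_le hb with h | h
  · subst h
    rcases Nat.eq_zero_or_pos b with h0 | h0
    · subst h0; simp
    · simp [Nat.choose_eq_zero_of_lt (show b - 1 < b by omega)]
  · have h1 := Nat.add_one_mul_choose_eq (a-1) (a-b-1)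
    have e1 : a - 1 + 1 = a := by omega
    have e2 : a-b-1+1 = a - b := by omega
    rw [e1, e2] at h1
    have e3 : Nat.choose (a-1) (a-b-1) = Nat.choose (a-1) b := by
      have : a - b - 1 = (a-1) - b := by omega
      rw [this, Nat.choose_symm (by omega)]
    rw [e3] at h1
    rw [← Nat.choose_symm hb, h1]
    ring

lemma key (m k : ℕ) :
    ∑ i ∈ range (m + 1), (-1 : ℚ) ^ i * (Nat.choose (2*k+2) i : ℚ) *
        (2*(k:ℚ) + 2*(i:ℚ) + 2) * (Nat.choose (3*m+2*k+1-i) (m-i) : ℚ)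
      = if m = 0 then (2*(k:ℚ)+2) else 0 := by
  match m with
  | 0 => simp
  | p + 1 =>
    simp only [Nat.succ_ne_zero, if_false]
    have split : ∀ i ∈ range (p+2),
        (-1 : ℚ) ^ i * (Nat.choose (2*k+2) i : ℚ) * (2*(k:ℚ) + 2*(i:ℚ) + 2) * (Nat.choose (3*(p+1)+2*k+1-i) ((p+1)-i) : ℚ)
        = (2*(k:ℚ)+2) * ((-1 : ℚ) ^ i * (Nat.choose (2*k+2) i : ℚ) * (Nat.choose (3*p+2*k+4-i) (p+1-i) : ℚ))
          + (-1 : ℚ) ^ i * (Nat.choose (2*k+2) i : ℚ) * (2*(i:ℚ)) * (Nat.choose (3*p+2*k+4-i) (p+1-i) : ℚ) := by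
      intro i _
      have e : 3*(p+1)+2*k+1-i = 3*p+2*k+4-i := by omega
      rw [e]
      ring
    rw [Finset.sum_congr rfl split, Finset.sum_add_distrib]
    have h1 : ∑ i ∈ range (p+2), (2*(k:ℚ)+2) * ((-1 : ℚ) ^ i * (Nat.choose (2*k+2) i : ℚ) * (Nat.choose (3*p+2*k+4-i) (p+1-i) : ℚ))
        = (2*(k:ℚ)+2) * (Nat.choose (3*p+2) (p+1) : ℚ) := by
      rw [← Finset.mul_sum]
      have := vand (2*k+2) (3*p+2*k+4) (p+1) (by omega)
      rw [this, show 3*p+2*k+4-(2*k+2) = 3*p+2 from by omega]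
    have h2 : ∑ i ∈ range (p+2), (-1 : ℚ) ^ i * (Nat.choose (2*k+2) i : ℚ) * (2*(i:ℚ)) * (Nat.choose (3*p+2*k+4-i) (p+1-i) : ℚ)
        = -(2*(2*(k:ℚ)+2)) * (Nat.choose (3*p+2) p : ℚ) := by
      rw [Finset.sum_range_succ']
      simp only [Nat.cast_zero, mul_zero, zero_mul, mul_zero, add_zero]
      have term : ∀ i ∈ range (p+1),
          (-1 : ℚ) ^ (i+1) * (Nat.choose (2*k+2) (i+1) : ℚ) * (2*((i+1 : ℕ):ℚ)) * (Nat.choose (3*p+2*k+4-(i+1)) (p+1-(i+1)) : ℚ)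
          = -(2*(2*(k:ℚ)+2)) * ((-1 : ℚ) ^ i * (Nat.choose (2*k+1) i : ℚ) * (Nat.choose ((3*p+2*k+3)-i) (p-i) : ℚ)) := by
        intro i _
        have hc : ((2*k+2) * Nat.choose (2*k+1) i : ℚ) = (Nat.choose (2*k+2) (i+1) : ℚ) * ((i:ℚ)+1) := by
          have := Nat.add_one_mul_choose_eq (2*k+1) i
          have e : 2*k+1+1 = 2*k+2 := rfl
          rw [e] at this
          exact_mod_cast congrArg (Nat.cast : ℕ → ℚ) this
        have e1 : 3*p+2*k+4-(i+1) = (3*p+2*k+3)-i := by omega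
        have e2 : p+1-(i+1) = p-i := by omega
        rw [e1, e2, pow_succ]
        push_cast
        linear_combination (2*(-1:ℚ)^i * (Nat.choose (3*p+2*k+3-i) (p-i) : ℚ)) * hc
      rw [Finset.sum_congr rfl term, ← Finset.mul_sum]
      have := vand (2*k+1) (3*p+2*k+3) p (by omega)
      rw [this, show 3*p+2*k+3-(2*k+1) = 3*p+2 from by omega]
    rw [h1, h2, choose_3m p]
    push_cast
    ring

lemma riordan_eval (n k : ℕ) :
    riordan ((1 - X) ^ 2) (X * (1 - X) ^ 2) n k =
      if k ≤ n then (-1) ^ (n - k) * (Nat.choose (2 * k + 2) (n - k) : ℚ) else 0 := by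
  have h : ((1 - X : PowerSeries ℚ)) ^ 2 * (X * (1 - X) ^ 2) ^ k
      = (1 - X) ^ (2 * k + 2) * X ^ k := by
    rw [mul_pow, ← pow_mul]
    ring
  rw [riordan, h, PowerSeries.coeff_mul_X_pow']
  split
  · rw [coeff_one_sub_X_pow]
  · rfl

lemma P1 (n k : ℕ) :
    ∑ j ∈ range (n + 1), Gf n j * riordan ((1 - X) ^ 2) (X * (1 - X) ^ 2) j k
      = if n = k then 1 else 0 := by
  by_cases hk : k ≤ n
  · -- main case
    obtain ⟨m, rfl⟩ : ∃ m, n = k + m := ⟨n - k, by omega⟩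
    have hsplit : ∑ j ∈ range (k + m + 1), Gf (k+m) j * riordan ((1 - X) ^ 2) (X * (1 - X) ^ 2) j k
        = ∑ i ∈ range (m + 1), Gf (k+m) (k+i) * riordan ((1 - X) ^ 2) (X * (1 - X) ^ 2) (k+i) k := by
      rw [Finset.range_eq_Ico, ← Finset.sum_Ico_consecutive _ (Nat.zero_le k) (by omega : k ≤ k + m + 1)]
      have h0 : ∑ j ∈ Finset.Ico 0 k, Gf (k+m) j * riordan ((1 - X) ^ 2) (X * (1 - X) ^ 2) j k = 0 := by
        apply Finset.sum_eq_zero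
        intro j hj
        simp only [Finset.mem_Ico] at hj
        rw [riordan_eval, if_neg (by omega), mul_zero]
      rw [h0, zero_add, Finset.sum_Ico_eq_sum_range]
      rw [show k + m + 1 - k = m + 1 from by omega, Finset.range_eq_Ico]
    rw [hsplit]
    have hterm : ∀ i ∈ range (m + 1),
        Gf (k+m) (k+i) * riordan ((1 - X) ^ 2) (X * (1 - X) ^ 2) (k+i) k
        = (1 / (2*((k:ℚ)+m) + 2)) * ((-1 : ℚ) ^ i * (Nat.choose (2*k+2) i : ℚ) *
            (2*(k:ℚ) + 2*(i:ℚ) + 2) * (Nat.choose (3*m+2*k+1-i) (m-i) : ℚ)) := by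
      intro i hi
      simp only [Finset.mem_range] at hi
      have hi' : i ≤ m := by omega
      rw [riordan_eval, if_pos (by omega)]
      have e0 : k + i - k = i := by omega
      have e1 : 3 * (k+m) + 2 - (k+i) = 3*m+2*k+2-i := by omega
      have e2 : (k+m) - (k+i) = m - i := by omega
      rw [Gf, e0, e1, e2]
      -- key division identity
      have hsub := sub_mul_choose (3*m+2*k+2-i) (m-i) (by omega)
      have e3 : (3*m+2*k+2-i) - (m-i) = 2*m+2*k+2 := by omega
      have e4 : (3*m+2*k+2-i) - 1 = 3*m+2*k+1-i := by omega
      rw [e3, e4] at hsub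
      have hq : ((2*m+2*k+2 : ℕ) : ℚ) * (Nat.choose (3*m+2*k+2-i) (m-i) : ℚ)
          = ((3*m+2*k+2-i : ℕ) : ℚ) * (Nat.choose (3*m+2*k+1-i) (m-i) : ℚ) := by
        exact_mod_cast congrArg (Nat.cast : ℕ → ℚ) hsub
      have hne : ((3*m+2*k+2-i : ℕ) : ℚ) ≠ 0 := Nat.cast_ne_zero.mpr (by omega)
      have hne2 : (2*((k:ℚ)+m) + 2) ≠ 0 := by positivity
      field_simp
      push_cast at hq ⊢
      linear_combination ((Nat.choose (2*k+2) i : ℚ) * ((k:ℚ)+(i:ℚ)+1)) * hq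
    rw [Finset.sum_congr rfl hterm, ← Finset.mul_sum, key m k]
    by_cases hm : m = 0
    · subst hm
      rw [if_pos rfl, if_pos (Nat.add_zero k)]
      push_cast
      field_simp
      ring
    · rw [if_neg hm, if_neg (by omega), mul_zero]
  · -- k > n : every entry zero
    rw [if_neg (by omega)]
    apply Finset.sum_eq_zero
    intro j hj
    simp only [Finset.mem_range] at hj
    rw [riordan_eval, if_neg (by omega), mul_zero]

lemma N_eq (N : ℕ → ℕ → ℚ)
    (hN1 : ∀ n k, ∑ j ∈ range (n + 1),
        riordan ((1 - X) ^ 2) (X * (1 - X) ^ 2) n j * N j k = if n = k then 1 else 0)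
    (n c : ℕ) (hc : c ≤ n) : N n c = Gf n c := by
  have hGc : ∑ i ∈ range (n + 1), Gf n i * (if i = c then (1:ℚ) else 0) = Gf n c := by
    simp only [mul_ite, mul_one, mul_zero]
    rw [Finset.sum_ite_eq' (range (n+1)) c (fun i => Gf n i), if_pos (mem_range.mpr (by omega))]
  have hinner : ∀ i ∈ range (n + 1), (if i = c then (1:ℚ) else 0)
      = ∑ j ∈ range (n + 1), riordan ((1 - X) ^ 2) (X * (1 - X) ^ 2) i j * N j c := by
    intro i hi
    simp only [mem_range] at hi
    rw [← hN1 i c]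
    apply Finset.sum_subset
    · intro x hx; simp only [mem_range] at hx ⊢; omega
    · intro j hj hnj
      simp only [mem_range] at hj hnj
      rw [riordan_eval, if_neg (by omega), zero_mul]
  symm
  calc Gf n c = ∑ i ∈ range (n + 1), Gf n i * (if i = c then (1:ℚ) else 0) := hGc.symm
    _ = ∑ i ∈ range (n + 1), Gf n i *
          (∑ j ∈ range (n + 1), riordan ((1 - X) ^ 2) (X * (1 - X) ^ 2) i j * N j c) := by
        refine Finset.sum_congr rfl fun i hi => ?_
        rw [← hinner i hi]
    _ = ∑ i ∈ range (n + 1), ∑ j ∈ range (n + 1),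
          Gf n i * riordan ((1 - X) ^ 2) (X * (1 - X) ^ 2) i j * N j c := by
        refine Finset.sum_congr rfl fun i _ => ?_
        rw [Finset.mul_sum]
        exact Finset.sum_congr rfl fun j _ => by ring
    _ = ∑ j ∈ range (n + 1), ∑ i ∈ range (n + 1),
          Gf n i * riordan ((1 - X) ^ 2) (X * (1 - X) ^ 2) i j * N j c := Finset.sum_comm
    _ = ∑ j ∈ range (n + 1), (if n = j then (1:ℚ) else 0) * N j c := by
        refine Finset.sum_congr rfl fun j _ => ?_
        rw [← Finset.sum_mul, P1 n j]
    _ = N n c := by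
        simp only [ite_mul, one_mul, zero_mul]
        rw [Finset.sum_ite_eq (range (n+1)) n (fun j => N j c), if_pos (mem_range.mpr (by omega))]

theorem product_entries_formula
    (N : ℕ → ℕ → ℚ)
    (hN1 : ∀ n k, ∑ j ∈ range (n + 1),
        riordan ((1 - X) ^ 2) (X * (1 - X) ^ 2) n j * N j k = if n = k then 1 else 0)
    (hN2 : ∀ n k, ∑ j ∈ range (n + 1),
        N n j * riordan ((1 - X) ^ 2) (X * (1 - X) ^ 2) j k = if n = k then 1 else 0) :
    ∀ n k : ℕ,
      ∑ i ∈ range (n + 1), N n i * (Nat.choose (i + k) (2 * k) : ℚ)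
        = ∑ i ∈ range (n + 1),
            (2 * (i : ℚ) + 2) / ((3 * n + 2 - i : ℕ) : ℚ)
              * (Nat.choose (3 * n + 2 - i) (n - i) : ℚ)
              * (Nat.choose (i + k) (2 * k) : ℚ) := by
  intro n k
  refine Finset.sum_congr rfl fun i hi => ?_
  simp only [mem_range] at hi
  rw [N_eq N hN1 n i (by omega), Gf, mul_assoc]
end

section
/- Let T be the inverse of the Riordan matrix of ((1−X)², X(1−X)²) over ℚ. Then T_{0,k} = δ_{0,k}, and for all n, k one has T_{n+1,k} = ∑_{j} a_{j,k}·T_{n,j}, where a_{j,k} = j − k + 2 if j ≥ k − 1 and a_{j,k} = 0 otherwise (the sum is finite since T_{n,j} = 0 for j > n). In other words, the matrix produced by the production matrix with entries (n,k) ↦ n − k + 2 (for k ≤ n+1, else 0) is the inverse of the Riordan matrix of ((1−X)², X(1−X)²). -/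
open PowerSeries Finset

namespace ProdAux

noncomputable def M (n k : ℕ) : ℚ := riordan ((1 - X) ^ 2) (X * (1 - X) ^ 2) n k

lemma gf_eq (m : ℕ) : ((1 - X : PowerSeries ℚ) ^ 2) * (X * (1 - X) ^ 2) ^ m
    = (1 - X) ^ (2 * m + 2) * X ^ m := by
  rw [mul_pow, ← pow_mul]
  ring

lemma M_eq (n m : ℕ) : M n m = coeff n ((1 - X : PowerSeries ℚ) ^ (2 * m + 2) * X ^ m) := by
  rw [M, riordan, gf_eq]

lemma M_lt {n m : ℕ} (h : n < m) : M n m = 0 := by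
  rw [M_eq, coeff_mul_X_pow', if_neg (by omega)]

lemma M_diag (m : ℕ) : M m m = 1 := by
  rw [M_eq, coeff_mul_X_pow', if_pos le_rfl]
  simp [coeff_zero_eq_constantCoeff_apply]

lemma sum_coeff_one_sub_X_mul (G : PowerSeries ℚ) (N : ℕ) :
    ∑ k ∈ range (N + 1), coeff k ((1 - X) * G) = coeff N G := by
  induction N with
  | zero => simp [coeff_zero_eq_constantCoeff_apply]
  | succ N ih =>
      rw [Finset.sum_range_succ, ih]
      have h : coeff (N + 1) ((1 - X) * G) = coeff (N + 1) G - coeff N G := by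
        rw [sub_mul, one_mul, map_sub, coeff_succ_X_mul]
      rw [h]; ring

lemma sum_weighted (H : PowerSeries ℚ) (N : ℕ) :
    ∑ k ∈ range (N + 1), ((N : ℚ) + 1 - k) * coeff k ((1 - X) ^ 2 * H) = coeff N H := by
  induction N with
  | zero =>
      simp [coeff_zero_eq_constantCoeff_apply]
  | succ N ih =>
      have hsq : ((1 - X : PowerSeries ℚ)) ^ 2 * H = (1 - X) * ((1 - X) * H) := by ring
      have h2 : ∑ k ∈ range (N + 2), coeff k ((1 - X) ^ 2 * H)
          = coeff (N + 1) ((1 - X) * H) := by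
        rw [hsq]; exact sum_coeff_one_sub_X_mul ((1 - X) * H) (N + 1)
      have h3 : coeff (N + 1) ((1 - X) * H) = coeff (N + 1) H - coeff N H := by
        rw [sub_mul, one_mul, map_sub, coeff_succ_X_mul]
      have h4 : ∀ k ∈ range (N + 2), ((N + 1 : ℕ) : ℚ) + 1 - k • (1:ℚ) = 0 → True := fun _ _ _ => trivial
      calc ∑ k ∈ range (N + 1 + 1), (((N + 1 : ℕ) : ℚ) + 1 - k) * coeff k ((1 - X) ^ 2 * H)
          = (∑ k ∈ range (N + 2), ((N : ℚ) + 1 - k) * coeff k ((1 - X) ^ 2 * H))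
            + ∑ k ∈ range (N + 2), coeff k ((1 - X) ^ 2 * H) := by
            rw [← Finset.sum_add_distrib]
            apply Finset.sum_congr rfl
            intro k _
            push_cast
            ring
        _ = coeff N H + (coeff (N + 1) H - coeff N H) := by
            rw [h2, h3, Finset.sum_range_succ]
            simp only [Nat.cast_add, Nat.cast_one]
            rw [show ((N : ℚ) + 1 - ((N : ℚ) + 1)) = 0 by ring, zero_mul, add_zero, ih]
        _ = coeff (N + 1) H := by ring

lemma prod_col (j m : ℕ) :
    ∑ k ∈ range (j + 2), (if k ≤ j + 1 then (j : ℚ) - k + 2 else 0) * M k m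
      = if m = 0 then 0 else M j (m - 1) := by
  set Hm : PowerSeries ℚ :=
    if m = 0 then 1 else X * ((1 - X) ^ 2 * (X * (1 - X) ^ 2) ^ (m - 1)) with hHm
  have hfac : ((1 - X : PowerSeries ℚ) ^ 2) * (X * (1 - X) ^ 2) ^ m = (1 - X) ^ 2 * Hm := by
    rcases Nat.eq_zero_or_pos m with h | h
    · subst h; simp [hHm]
    · obtain ⟨m', rfl⟩ := Nat.exists_eq_succ_of_ne_zero h.ne'
      simp only [hHm, Nat.succ_ne_zero, if_false, Nat.succ_sub_one, Nat.succ_eq_add_one]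
      rw [pow_succ]
      ring
  have hM : ∀ k, M k m = coeff k ((1 - X : PowerSeries ℚ) ^ 2 * Hm) := by
    intro k; rw [M, riordan, hfac]
  have hcalc : ∑ k ∈ range (j + 2), (if k ≤ j + 1 then (j : ℚ) - k + 2 else 0) * M k m
      = coeff (j + 1) Hm := by
    rw [← sum_weighted Hm (j + 1)]
    apply Finset.sum_congr rfl
    intro k hk
    rw [Finset.mem_range] at hk
    rw [if_pos (by omega), hM k]
    push_cast
    ring_nf
  rw [hcalc]
  rcases Nat.eq_zero_or_pos m with h | h
  · subst h
    simp [hHm, coeff_one]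
  · obtain ⟨m', rfl⟩ := Nat.exists_eq_succ_of_ne_zero h.ne'
    simp only [hHm, Nat.succ_ne_zero, if_false, Nat.succ_sub_one]
    rw [coeff_succ_X_mul]
    rfl

lemma T_tri (T : ℕ → ℕ → ℚ)
    (hT1 : ∀ n k, ∑ j ∈ range (n + 1),
        riordan ((1 - X) ^ 2) (X * (1 - X) ^ 2) n j * T j k = if n = k then 1 else 0) :
    ∀ n k, n < k → T n k = 0 := by
  intro n
  induction n using Nat.strong_induction_on with
  | _ n ih =>
      intro k hk
      have h := hT1 n k
      rw [if_neg (by omega)] at h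
      rw [Finset.sum_eq_single_of_mem n (Finset.self_mem_range_succ n)] at h
      · have := M_diag n
        rw [M] at this
        rw [this, one_mul] at h
        exact h
      · intro j hj hjn
        rw [Finset.mem_range] at hj
        rw [ih j (by omega) k (by omega), mul_zero]

lemma unique_row (u : ℕ → ℚ) (N : ℕ) (hsup : ∀ k, N < k → u k = 0)
    (heq : ∀ m, ∑ k ∈ range (N + 1), u k * M k m = 0) : ∀ m, u m = 0 := by
  have key : ∀ d m, N + 1 - m ≤ d → u m = 0 := by
    intro d
    induction d with
    | zero => intro m hm; exact hsup m (by omega)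
    | succ d ih =>
        intro m hm
        by_cases hmN : N < m
        · exact hsup m hmN
        · have h0 := heq m
          rw [Finset.sum_eq_single_of_mem m (by rw [Finset.mem_range]; omega)] at h0
          · rwa [M_diag, mul_one] at h0
          · intro k hk hkm
            rcases lt_or_gt_of_ne hkm with h | h
            · rw [M_lt h, mul_zero]
            · rw [ih k (by omega), zero_mul]
  intro m
  exact key (N + 1 - m) m le_rfl

end ProdAux

open ProdAux in
theorem produced_matrix_square_case
    (T : ℕ → ℕ → ℚ)
    (hT1 : ∀ n k, ∑ j ∈ range (n + 1),
        riordan ((1 - X) ^ 2) (X * (1 - X) ^ 2) n j * T j k = if n = k then 1 else 0)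
    (hT2 : ∀ n k, ∑ j ∈ range (n + 1),
        T n j * riordan ((1 - X) ^ 2) (X * (1 - X) ^ 2) j k = if n = k then 1 else 0) :
    (∀ k, T 0 k = if k = 0 then 1 else 0)
    ∧ ∀ n k, T (n + 1) k
        = ∑ j ∈ range (n + 1), (if k ≤ j + 1 then (j : ℚ) - k + 2 else 0) * T n j := by
  have hM : ∀ n k, riordan ((1 - X) ^ 2) (X * (1 - X) ^ 2) n k = M n k := fun _ _ => rfl
  constructor
  · intro k
    have h := hT1 0 k
    rw [Finset.sum_range_one, hM, M_diag, one_mul] at h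
    rw [h]
    by_cases hk : k = 0 <;> simp [hk, eq_comm]
  · intro n k
    set u : ℕ → ℚ := fun i =>
      T (n + 1) i - ∑ j ∈ range (n + 1), (if i ≤ j + 1 then (j : ℚ) - i + 2 else 0) * T n j
      with hu
    have hsup : ∀ i, n + 1 < i → u i = 0 := by
      intro i hi
      have h1 : T (n + 1) i = 0 := T_tri T hT1 (n + 1) i hi
      have h2 : ∑ j ∈ range (n + 1), (if i ≤ j + 1 then (j : ℚ) - i + 2 else 0) * T n j = 0 := by
        apply Finset.sum_eq_zero
        intro j hj
        rw [Finset.mem_range] at hj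
        rw [if_neg (by omega), zero_mul]
      simp only [hu, h1, h2, sub_zero]
    have heq : ∀ m, ∑ i ∈ range (n + 2), u i * M i m = 0 := by
      intro m
      have e1 : ∑ i ∈ range (n + 2), T (n + 1) i * M i m = if n + 1 = m then 1 else 0 := by
        have := hT2 (n + 1) m
        simp only [hM] at this
        exact this
      have e2 : ∑ i ∈ range (n + 2),
          (∑ j ∈ range (n + 1), (if i ≤ j + 1 then (j : ℚ) - i + 2 else 0) * T n j) * M i m
          = if n + 1 = m then 1 else 0 := by
        have swap : ∑ i ∈ range (n + 2),
            (∑ j ∈ range (n + 1), (if i ≤ j + 1 then (j : ℚ) - i + 2 else 0) * T n j) * M i m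
            = ∑ j ∈ range (n + 1), T n j *
              (∑ i ∈ range (n + 2), (if i ≤ j + 1 then (j : ℚ) - i + 2 else 0) * M i m) := by
          simp only [Finset.sum_mul, Finset.mul_sum]
          rw [Finset.sum_comm]
          apply Finset.sum_congr rfl
          intro j _
          apply Finset.sum_congr rfl
          intro i _
          ring
        rw [swap]
        have inner : ∀ j ∈ range (n + 1),
            (∑ i ∈ range (n + 2), (if i ≤ j + 1 then (j : ℚ) - i + 2 else 0) * M i m)
            = if m = 0 then 0 else M j (m - 1) := by
          intro j hj
          rw [Finset.mem_range] at hj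
          rw [← prod_col j m]
          rw [← Finset.sum_subset (Finset.range_subset_range.2 (by omega : j + 2 ≤ n + 2))]
          intro i hi hni
          rw [Finset.mem_range] at hi
          rw [Finset.mem_range, not_lt] at hni
          rw [if_neg (by omega), zero_mul]
        rw [Finset.sum_congr rfl (fun j hj => by rw [inner j hj])]
        rcases Nat.eq_zero_or_pos m with h | h
        · subst h
          simp
        · obtain ⟨m', rfl⟩ := Nat.exists_eq_succ_of_ne_zero h.ne'
          simp only [Nat.succ_ne_zero, if_false, Nat.succ_sub_one]
          have := hT2 n m'
          simp only [hM] at this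
          rw [Finset.sum_congr rfl (fun j _ => rfl), this]
          by_cases hnm : n = m' <;> simp [hnm]
      calc ∑ i ∈ range (n + 2), u i * M i m
          = (∑ i ∈ range (n + 2), T (n + 1) i * M i m)
            - ∑ i ∈ range (n + 2),
              (∑ j ∈ range (n + 1), (if i ≤ j + 1 then (j : ℚ) - i + 2 else 0) * T n j)
                * M i m := by
            rw [← Finset.sum_sub_distrib]
            apply Finset.sum_congr rfl
            intro i _
            simp only [hu]
            ring
        _ = 0 := by rw [e1, e2, sub_self]
    have := unique_row u (n + 1) hsup heq k
    simp only [hu] at this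
    linarith [this]
end

section
/- Let r be a rational number and let C(X) = ∑_{n≥0} (1/(n+1))·C(2n,n)·X^n be the Catalan number generating function. Then the matrix product of the Riordan matrix of (1−rX, X(1−rX)) with the Riordan matrix of (C(rX)², X·C(rX)²) equals the Riordan matrix of (1/(1−rX), X/(1−rX)). Equivalently, the matrix M(r) produced by the second production matrix of the r-th binomial matrix (1/(1−rX), X/(1−rX)) is the Riordan matrix of (C(rX)², X·C(rX)²). -/
open PowerSeries Finset

/-- The generating function of the Catalan numbers,
`C(X) = ∑_{n≥0} (1/(n+1))·C(2n,n)·Xⁿ`. -/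
noncomputable def catGF : PowerSeries ℚ :=
  PowerSeries.mk fun n => (1 / ((n : ℚ) + 1)) * (Nat.choose (2 * n) n : ℚ)

lemma catGF_eq : catGF = PowerSeries.mk fun n => (catalan n : ℚ) := by
  ext n
  simp only [catGF, coeff_mk]
  have h := succ_mul_catalan_eq_centralBinom n
  have h' : ((n + 1) * catalan n : ℚ) = (Nat.centralBinom n : ℚ) := by
    exact_mod_cast congrArg (Nat.cast : ℕ → ℚ) h
  rw [Nat.centralBinom] at h'
  have hn : ((n : ℚ) + 1) ≠ 0 := by positivity
  field_simp
  linarith [h']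

lemma catGF_eqn : catGF = 1 + X * catGF ^ 2 := by
  rw [catGF_eq]
  ext n
  cases n with
  | zero => simp [catalan_zero]
  | succ n =>
    rw [map_add, coeff_succ_X_mul, sq, coeff_mul]
    simp only [coeff_mk, coeff_one, Nat.succ_ne_zero, if_false, zero_add]
    rw [catalan_succ']
    push_cast
    rfl

lemma coeff_pow_zero {f : PowerSeries ℚ} (hf : constantCoeff f = 0)
    {a p : ℕ} (h : p < a) : PowerSeries.coeff p (f ^ a) = 0 := by
  have hd : (X : PowerSeries ℚ) ^ a ∣ f ^ a := pow_dvd_pow_of_dvd (X_dvd_iff.mpr hf) a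
  exact (X_pow_dvd_iff.mp hd) p h

/-- Hand-rolled composition: `pcomp H f = H ∘ f`, valid when `f` has zero constant term. -/
noncomputable def pcomp (H f : PowerSeries ℚ) : PowerSeries ℚ :=
  PowerSeries.mk fun n =>
    ∑ j ∈ range (n + 1), PowerSeries.coeff j H * PowerSeries.coeff n (f ^ j)

lemma coeff_pcomp (H f : PowerSeries ℚ) (n : ℕ) :
    PowerSeries.coeff n (pcomp H f)
      = ∑ j ∈ range (n + 1), PowerSeries.coeff j H * PowerSeries.coeff n (f ^ j) := by
  simp [pcomp]

lemma coeff_pcomp_of_le {f : PowerSeries ℚ} (hf : constantCoeff f = 0) (H : PowerSeries ℚ)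
    {n N : ℕ} (h : n ≤ N) :
    PowerSeries.coeff n (pcomp H f)
      = ∑ j ∈ range (N + 1), PowerSeries.coeff j H * PowerSeries.coeff n (f ^ j) := by
  rw [coeff_pcomp]
  apply sum_subset (by intro x hx; simp only [mem_range] at *; omega)
  intro j hj hj'
  simp only [mem_range] at *
  rw [coeff_pow_zero hf (by omega), mul_zero]

lemma pcomp_add (H₁ H₂ f : PowerSeries ℚ) :
    pcomp (H₁ + H₂) f = pcomp H₁ f + pcomp H₂ f := by
  ext n
  simp [coeff_pcomp, add_mul, sum_add_distrib]

lemma pcomp_one (f : PowerSeries ℚ) : pcomp 1 f = 1 := by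
  ext n
  rw [coeff_pcomp]
  rcases Nat.eq_zero_or_pos n with h | h
  · subst h; simp
  · rw [sum_eq_single 0 (by intro j _ hj; simp [coeff_one, hj]) (by simp)]
    simp [coeff_one, h.ne']

lemma pcomp_X {f : PowerSeries ℚ} (hf : constantCoeff f = 0) : pcomp X f = f := by
  ext n
  rw [coeff_pcomp]
  rcases Nat.eq_zero_or_pos n with h | h
  · subst h
    simp [coeff_zero_eq_constantCoeff, hf]
  · rw [sum_eq_single 1 (by intro j _ hj; simp [coeff_X, hj]) (by intro h'; simp at h'; omega)]
    simp [coeff_X]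

lemma pcomp_rescale (r : ℚ) (H f : PowerSeries ℚ) :
    pcomp (rescale r H) f = pcomp H (PowerSeries.C r * f) := by
  ext n
  rw [coeff_pcomp, coeff_pcomp]
  apply sum_congr rfl
  intro j _
  rw [coeff_rescale, mul_pow, ← map_pow, coeff_C_mul]; ring

lemma sum_range_antidiag (n : ℕ) (F : ℕ → ℕ → ℚ) :
    ∑ j ∈ range (n + 1), ∑ p ∈ Finset.HasAntidiagonal.antidiagonal j, F p.1 p.2
      = ∑ p ∈ (range (n + 1) ×ˢ range (n + 1)).filter (fun p => p.1 + p.2 ≤ n), F p.1 p.2 := by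
  rw [← Finset.sum_biUnion]
  · apply Finset.sum_congr _ (fun _ _ => rfl)
    ext p
    simp only [mem_biUnion, mem_range, Finset.HasAntidiagonal.mem_antidiagonal, mem_filter, mem_product]
    constructor
    · rintro ⟨j, hj, hm⟩; omega
    · rintro ⟨⟨h1, h2⟩, h3⟩; exact ⟨p.1 + p.2, by omega, rfl⟩
  · intro a _ b _ hab
    simp only [Function.onFun, Finset.disjoint_left]
    intro p hp hp'
    simp only [Finset.HasAntidiagonal.mem_antidiagonal] at hp hp'
    exact hab (by omega)

lemma pcomp_mul' {f : PowerSeries ℚ} (hf : constantCoeff f = 0) (H₁ H₂ : PowerSeries ℚ) :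
    pcomp (H₁ * H₂) f = pcomp H₁ f * pcomp H₂ f := by
  ext n
  have lhs : PowerSeries.coeff n (pcomp (H₁ * H₂) f)
      = ∑ p ∈ range (n + 1) ×ˢ range (n + 1),
          PowerSeries.coeff p.1 H₁ * PowerSeries.coeff p.2 H₂ *
            PowerSeries.coeff n (f ^ (p.1 + p.2)) := by
    rw [coeff_pcomp]
    have : ∀ j ∈ range (n + 1),
        PowerSeries.coeff j (H₁ * H₂) * PowerSeries.coeff n (f ^ j)
        = ∑ p ∈ Finset.HasAntidiagonal.antidiagonal j,
            PowerSeries.coeff p.1 H₁ * PowerSeries.coeff p.2 H₂ *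
              PowerSeries.coeff n (f ^ (p.1 + p.2)) := by
      intro j hj
      rw [coeff_mul, sum_mul]
      apply sum_congr rfl
      intro p hp
      rw [Finset.HasAntidiagonal.mem_antidiagonal] at hp
      rw [hp]
    rw [sum_congr rfl this,
      sum_range_antidiag n (fun a b => PowerSeries.coeff a H₁ * PowerSeries.coeff b H₂ *
        PowerSeries.coeff n (f ^ (a + b)))]
    apply sum_subset (filter_subset _ _)
    intro p hp hp'
    simp only [mem_filter, mem_product, mem_range] at hp hp'
    rw [coeff_pow_zero hf (by omega), mul_zero]
  have rhs : PowerSeries.coeff n (pcomp H₁ f * pcomp H₂ f)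
      = ∑ p ∈ range (n + 1) ×ˢ range (n + 1),
          PowerSeries.coeff p.1 H₁ * PowerSeries.coeff p.2 H₂ *
            PowerSeries.coeff n (f ^ (p.1 + p.2)) := by
    rw [coeff_mul]
    have : ∀ q ∈ Finset.HasAntidiagonal.antidiagonal n,
        PowerSeries.coeff q.1 (pcomp H₁ f) * PowerSeries.coeff q.2 (pcomp H₂ f)
        = ∑ p ∈ range (n + 1) ×ˢ range (n + 1),
            PowerSeries.coeff p.1 H₁ * PowerSeries.coeff p.2 H₂ *
              (PowerSeries.coeff q.1 (f ^ p.1) * PowerSeries.coeff q.2 (f ^ p.2)) := by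
      intro q hq
      rw [Finset.HasAntidiagonal.mem_antidiagonal] at hq
      rw [coeff_pcomp_of_le hf H₁ (show q.1 ≤ n by omega),
          coeff_pcomp_of_le hf H₂ (show q.2 ≤ n by omega), sum_mul_sum,
          ← Finset.sum_product']
      apply sum_congr rfl
      intro p _
      ring
    rw [sum_congr rfl this, Finset.sum_comm]
    apply sum_congr rfl
    intro p _
    rw [pow_add, coeff_mul, mul_sum]
  rw [lhs, rhs]

lemma pcomp_pow {f : PowerSeries ℚ} (hf : constantCoeff f = 0) (H : PowerSeries ℚ) (k : ℕ) :
    pcomp (H ^ k) f = (pcomp H f) ^ k := by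
  induction k with
  | zero => simpa using pcomp_one f
  | succ k ih => rw [pow_succ, pow_succ, pcomp_mul' hf, ih]

lemma sum_riordan {f : PowerSeries ℚ} (hf : constantCoeff f = 0) (g G : PowerSeries ℚ) (n : ℕ) :
    ∑ j ∈ range (n + 1), PowerSeries.coeff n (g * f ^ j) * PowerSeries.coeff j G
      = PowerSeries.coeff n (g * pcomp G f) := by
  have rhs : PowerSeries.coeff n (g * pcomp G f)
      = ∑ q ∈ Finset.HasAntidiagonal.antidiagonal n, ∑ j ∈ range (n + 1),
          PowerSeries.coeff q.1 g *
            (PowerSeries.coeff j G * PowerSeries.coeff q.2 (f ^ j)) := by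
    rw [coeff_mul]
    apply sum_congr rfl
    intro q hq
    rw [Finset.HasAntidiagonal.mem_antidiagonal] at hq
    rw [coeff_pcomp_of_le hf G (show q.2 ≤ n by omega), mul_sum]
  rw [rhs, Finset.sum_comm]
  apply sum_congr rfl
  intro j _
  rw [coeff_mul, sum_mul]
  apply sum_congr rfl
  intro q _
  ring

theorem binomial_second_production_factorization (r : ℚ) :
    ∀ n k : ℕ,
      ∑ j ∈ range (n + 1),
          riordan (1 - PowerSeries.C r * X) (X * (1 - PowerSeries.C r * X)) n j
            * riordan ((rescale r catGF) ^ 2) (X * (rescale r catGF) ^ 2) j k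
        = riordan (1 - PowerSeries.C r * X)⁻¹ (X * (1 - PowerSeries.C r * X)⁻¹) n k := by
  intro n k
  set u : PowerSeries ℚ := 1 - PowerSeries.C r * X with hu_def
  set f : PowerSeries ℚ := X * u with hf_def
  set A : PowerSeries ℚ := rescale r catGF with hA_def
  have hu0 : constantCoeff u = 1 := by simp [hu_def]
  have hu : u * u⁻¹ = 1 := PowerSeries.mul_inv_cancel u (by rw [hu0]; exact one_ne_zero)
  have hf : constantCoeff f = 0 := by simp [hf_def]
  have hg : constantCoeff (PowerSeries.C r * f) = 0 := by simp [hf]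
  set B : PowerSeries ℚ := pcomp A f with hB_def
  have Beq : B = 1 + (PowerSeries.C r * f) * B ^ 2 := by
    rw [hB_def, hA_def, pcomp_rescale]
    conv_lhs => rw [catGF_eqn]
    rw [pcomp_add, pcomp_one, pcomp_mul' hg, pcomp_X hg, pcomp_pow hg, ← pcomp_rescale, ← hA_def]
  have h1 : u⁻¹ = 1 + PowerSeries.C r * X * u⁻¹ := by
    have hu' : (1 - PowerSeries.C r * X) * u⁻¹ = 1 := by rw [← hu_def]; exact hu
    linear_combination hu'
  have huinv : u⁻¹ = 1 + (PowerSeries.C r * f) * (u⁻¹) ^ 2 := by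
    rw [hf_def]
    linear_combination h1 - PowerSeries.C r * X * u⁻¹ * hu
  have hfac : (B - u⁻¹) * (1 - (PowerSeries.C r * f) * (B + u⁻¹)) = 0 := by
    linear_combination Beq - huinv
  have hBu : B = u⁻¹ := by
    rcases mul_eq_zero.mp hfac with h | h
    · exact sub_eq_zero.mp h
    · exfalso
      have := congrArg (constantCoeff) h
      simp [hf] at this
  simp only [riordan]
  rw [sum_riordan hf]
  congr 1
  have hG : pcomp (A ^ 2 * (X * A ^ 2) ^ k) f = u⁻¹ ^ 2 * (X * u⁻¹) ^ k := by
    rw [pcomp_mul' hf, pcomp_pow hf, pcomp_pow hf, pcomp_mul' hf, pcomp_X hf, pcomp_pow hf,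
      ← hB_def, hBu]
    congr 2
    rw [hf_def]
    linear_combination X * u⁻¹ * hu
  rw [hG]
  linear_combination u⁻¹ * (X * u⁻¹) ^ k * hu
end

section
/- Let r be a rational number and for each natural number n define the polynomial P_n(x) = ∑_{k=0}^{n} (−r)^{n−k}·C(n+k+1, n−k)·x^k in ℚ[x] (these are the rows of the coefficient array (1/(1+rX)², X/(1+rX)²)). Then P_0(x) = 1, P_1(x) = x − 2r, and for all n ≥ 2 the polynomials satisfy the three-term recurrence P_n(x) = (x − 2r)·P_{n−1}(x) − r²·P_{n−2}(x). -/
open Finset Polynomial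

private lemma coeffP (r : ℚ) (n m : ℕ) :
    (∑ k ∈ range (n + 1),
        Polynomial.C ((-r) ^ (n - k) * (Nat.choose (n + k + 1) (n - k) : ℚ))
          * Polynomial.X ^ k).coeff m
      = if m ≤ n then (-r) ^ (n - m) * (Nat.choose (n + m + 1) (n - m) : ℚ) else 0 := by
  rw [Polynomial.finset_sum_coeff]
  simp only [Polynomial.coeff_C_mul, Polynomial.coeff_X_pow, mul_ite, mul_one, mul_zero]
  rw [Finset.sum_ite_eq (range (n+1)) m
    (fun k => (-r) ^ (n - k) * (Nat.choose (n + k + 1) (n - k) : ℚ))]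
  simp [Nat.lt_succ_iff]

private lemma keyNat (t e : ℕ) :
    (t+2).choose (e+2) + t.choose e = t.choose (e+2) + 2 * (t+1).choose (e+1) := by
  simp [Nat.choose_succ_succ]; ring

theorem orthogonal_polynomial_three_term_recurrence (r : ℚ)
    (P : ℕ → Polynomial ℚ)
    (hPdef : ∀ n, P n = ∑ k ∈ range (n + 1),
        Polynomial.C ((-r) ^ (n - k) * (Nat.choose (n + k + 1) (n - k) : ℚ))
          * Polynomial.X ^ k) :
    P 0 = 1 ∧ P 1 = Polynomial.X - Polynomial.C (2 * r)
    ∧ ∀ n, 2 ≤ n →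
        P n = (Polynomial.X - Polynomial.C (2 * r)) * P (n - 1)
          - Polynomial.C (r ^ 2) * P (n - 2) := by
  refine ⟨?_, ?_, ?_⟩
  · rw [hPdef]; simp
  · rw [hPdef]
    rw [Finset.sum_range_succ, Finset.sum_range_succ, Finset.sum_range_zero]
    norm_num
    ring
  · intro n hn
    obtain ⟨j, rfl⟩ : ∃ j, n = j + 2 := ⟨n - 2, by omega⟩
    have h1 : j + 2 - 1 = j + 1 := rfl
    have h2 : j + 2 - 2 = j := rfl
    rw [h1, h2, hPdef, hPdef, hPdef, sub_mul]
    ext m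
    simp only [Polynomial.coeff_sub, Polynomial.coeff_C_mul]
    rcases m with _ | m
    · rw [Polynomial.mul_coeff_zero]
      simp only [Polynomial.coeff_X_zero, zero_mul, coeffP]
      rw [if_pos (by omega), if_pos (by omega), if_pos (by omega)]
      simp only [Nat.sub_zero, Nat.add_zero]
      rw [show j + 2 + 1 = (j+2) + 1 from rfl, Nat.choose_succ_self_right,
        show j + 1 + 1 = (j+1) + 1 from rfl, Nat.choose_succ_self_right,
        Nat.choose_succ_self_right]
      push_cast
      ring
    · rw [Polynomial.coeff_X_mul]
      simp only [coeffP]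
      by_cases hm : m ≤ j
      · obtain ⟨e, rfl⟩ : ∃ e, j = m + e := ⟨j - m, by omega⟩
        rcases e with _ | e
        · rw [if_pos (by omega), if_pos (by omega), if_pos (by omega), if_neg (by omega)]
          simp only [show m + 0 + 2 - (m + 1) = 1 from by omega,
            show m + 0 + 1 - m = 1 from by omega,
            show m + 0 + 1 - (m + 1) = 0 from by omega,
            show m + 0 + 2 + (m + 1) + 1 = 2*m + 4 from by omega,
            show m + 0 + 1 + m + 1 = 2*m + 2 from by omega,
            show m + 0 + 1 + (m + 1) + 1 = 2*m + 3 from by omega,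
            Nat.choose_one_right, Nat.choose_zero_right]
          push_cast
          ring
        · rw [if_pos (by omega), if_pos (by omega), if_pos (by omega), if_pos (by omega)]
          simp only [show m + (e+1) + 2 - (m + 1) = e + 2 from by omega,
            show m + (e+1) + 1 - m = e + 2 from by omega,
            show m + (e+1) + 1 - (m + 1) = e + 1 from by omega,
            show m + (e+1) - (m + 1) = e from by omega,
            show m + (e+1) + 2 + (m + 1) + 1 = (2*m + e + 3) + 2 from by omega,
            show m + (e+1) + 1 + m + 1 = 2*m + e + 3 from by omega,
            show m + (e+1) + 1 + (m + 1) + 1 = (2*m + e + 3) + 1 from by omega,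
            show m + (e+1) + (m + 1) + 1 = 2*m + e + 3 from by omega]
          have hk : (((2*m+e+3)+2).choose (e+2) : ℚ) + ((2*m+e+3).choose e : ℚ)
              = ((2*m+e+3).choose (e+2) : ℚ) + 2 * (((2*m+e+3)+1).choose (e+1) : ℚ) := by
            exact_mod_cast keyNat (2*m+e+3) e
          linear_combination (-r)^(e+2) * hk
      · by_cases hm2 : m = j + 1
        · subst hm2
          rw [if_pos (by omega), if_pos (by omega), if_neg (by omega), if_neg (by omega)]
          simp only [show j + 2 - (j + 1 + 1) = 0 from by omega,
            show j + 1 - (j + 1) = 0 from by omega, Nat.choose_zero_right]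
          push_cast
          ring
        · rw [if_neg (by omega), if_neg (by omega), if_neg (by omega), if_neg (by omega)]
          ring
end

section
/- Let g be a formal power series over ℚ with g(0) = 1 and let M be the Riordan matrix of the Appell pair (g, X), so M_{n,k} = [X^{n−k}]g for k ≤ n and 0 otherwise. Let P̃ be the second production matrix of M and let T be the matrix produced by P̃. Then T = M; that is, the Appell subgroup is invariant under the second-production-matrix process. -/
open PowerSeries Finset

theorem appell_subgroup_invariant
    (g : PowerSeries ℚ) (hg : constantCoeff g = 1)
    (P T : ℕ → ℕ → ℚ)
    (hP : ∀ n k, ∑ j ∈ range (n + 1), riordan g X n j * P j k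
          = riordan g X (n + 2) k)
    (hT0 : ∀ k, T 0 k = if k = 0 then 1 else 0)
    (hT : ∀ n k, T (n + 1) k = ∑ j ∈ range (n + 2), T n j * P j (k + 1)) :
    ∀ n k, T n k = riordan g X n k := by
  have hg0 : constantCoeff g ≠ 0 := by rw [hg]; exact one_ne_zero
  have hginv : g * g⁻¹ = 1 := PowerSeries.mul_inv_cancel g hg0
  set G : ℕ → ℚ := fun n => coeff n g with hGdef
  set H : ℕ → ℚ := fun n => coeff n g⁻¹ with hHdef
  have hG0 : G 0 = 1 := by simpa [hGdef, coeff_zero_eq_constantCoeff] using hg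
  have hH0 : H 0 = 1 := by
    simp only [hHdef, coeff_zero_eq_constantCoeff, PowerSeries.constantCoeff_inv, hg]
    norm_num
  have hri : ∀ n k, riordan g X n k = if k ≤ n then G (n - k) else 0 := by
    intro n k
    simp [riordan, coeff_mul_X_pow' (R := ℚ) g k n, hGdef]
  have hconv : ∀ n, ∑ i ∈ range (n + 1), G i * H (n - i) = if n = 0 then 1 else 0 := by
    intro n
    have h := congrArg (coeff n) hginv
    rw [coeff_mul, Finset.Nat.sum_antidiagonal_eq_sum_range_succ_mk] at h
    simpa [coeff_one, hGdef, hHdef] using h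
  -- key convolution identity
  have hS : ∀ n : ℕ, G (n + 1) + (∑ j ∈ range n, G (n - j) * H (j + 1)) + H (n + 1) = 0 := by
    intro n
    have h := hconv (n + 1)
    rw [Finset.sum_range_succ] at h
    have hrefl : ∑ j ∈ range (n + 1), G (n - j) * H (j + 1)
        = ∑ i ∈ range (n + 1), G i * H (n + 1 - i) := by
      rw [← Finset.sum_range_reflect (fun i => G i * H (n + 1 - i)) (n + 1)]
      apply Finset.sum_congr rfl
      intro j hj
      rw [Finset.mem_range] at hj
      have h1 : n + 1 - 1 - j = n - j := by omega
      have h2 : n + 1 - (n - j) = j + 1 := by omega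
      rw [h1, h2]
    rw [Finset.sum_range_succ] at hrefl
    simp only [hG0, hH0, Nat.sub_self, mul_one, one_mul] at h hrefl
    simp only [if_neg (Nat.succ_ne_zero n)] at h
    linarith
  -- closed form for P (columns ≥ 1)
  have hPval : ∀ n k, P n (k + 1)
      = if k = 0 then -H (n + 1) else if k = n + 1 then 1 else 0 := by
    intro n
    induction n using Nat.strong_induction_on with
    | _ n ih =>
      intro k
      have h := hP n (k + 1)
      rw [Finset.sum_range_succ] at h
      have hnn : riordan g X n n = 1 := by
        rw [hri]; simp [hG0]
      rw [hnn, one_mul] at h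
      -- h : (∑ j ∈ range n, riordan g X n j * P j (k+1)) + P n (k+1) = riordan g X (n+2) (k+1)
      have hsum : ∑ j ∈ range n, riordan g X n j * P j (k + 1)
          = ∑ j ∈ range n, G (n - j) *
              (if k = 0 then -H (j + 1) else if k = j + 1 then 1 else 0) := by
        apply Finset.sum_congr rfl
        intro j hj
        rw [Finset.mem_range] at hj
        rw [hri, if_pos (le_of_lt hj), ih j hj]
      rw [hsum] at h
      rcases Nat.eq_zero_or_pos k with hk | hk
      · subst hk
        simp only [↓reduceIte] at h ⊢
        have hr : riordan g X (n + 2) 1 = G (n + 1) := by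
          rw [hri]; simp
        rw [hr] at h
        have hs := hS n
        have : ∑ j ∈ range n, G (n - j) * (-H (j + 1))
            = -∑ j ∈ range n, G (n - j) * H (j + 1) := by
          simp [mul_neg]
        rw [this] at h
        linarith
      · obtain ⟨k', rfl⟩ := Nat.exists_eq_add_of_lt hk
        simp only [Nat.zero_add] at *
        have hne : k' + 1 ≠ 0 := Nat.succ_ne_zero k'
        simp only [if_neg hne] at h ⊢
        have hsum2 : ∑ j ∈ range n, G (n - j) * (if k' + 1 = j + 1 then 1 else 0)
            = if k' < n then G (n - k') else 0 := by
          have : ∀ j, G (n - j) * (if k' + 1 = j + 1 then 1 else 0)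
              = if j = k' then G (n - j) else 0 := by
            intro j
            by_cases hjk : j = k'
            · subst hjk; simp
            · rw [if_neg hjk, if_neg (by omega), mul_zero]
          rw [Finset.sum_congr rfl fun j _ => this j, Finset.sum_ite_eq' (range n) k']
          simp [Finset.mem_range]
        rw [hsum2] at h
        have hr : riordan g X (n + 2) (k' + 1 + 1) = if k' ≤ n then G (n - k') else 0 := by
          rw [hri]
          by_cases hkn : k' ≤ n
          · rw [if_pos (by omega), if_pos hkn]
            congr 1; omega
          · rw [if_neg (by omega), if_neg hkn]
        rw [hr] at h
        rcases lt_trichotomy k' n with hlt | heq | hgt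
        · rw [if_neg (by omega)]
          rw [if_pos hlt, if_pos (le_of_lt hlt)] at h
          linarith
        · subst heq
          rw [if_pos rfl]
          rw [if_neg (lt_irrefl _), if_pos le_rfl, Nat.sub_self, hG0] at h
          linarith
        · rw [if_neg (by omega)]
          rw [if_neg (by omega), if_neg (by omega)] at h
          linarith
  -- main induction
  intro n
  induction n with
  | zero =>
    intro k
    rw [hT0, hri]
    by_cases hk : k = 0
    · subst hk; simp [hG0]
    · rw [if_neg hk, if_neg (by omega)]
  | succ n ih =>
    intro k
    rw [hT n k]
    have hsum : ∑ j ∈ range (n + 2), T n j * P j (k + 1)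
        = ∑ j ∈ range (n + 2), (if j ≤ n then G (n - j) else 0) *
            (if k = 0 then -H (j + 1) else if k = j + 1 then 1 else 0) := by
      apply Finset.sum_congr rfl
      intro j _
      rw [ih j, hri, hPval]
    rw [hsum]
    cases k with
    | zero =>
      simp only [↓reduceIte]
      rw [Finset.sum_range_succ, Finset.sum_range_succ]
      have c1 : n ≤ n := le_rfl
      have c2 : ¬(n + 1 ≤ n) := by omega
      rw [if_pos c1, if_neg c2, Nat.sub_self, hG0, zero_mul, one_mul, add_zero]
      have hcong : ∑ j ∈ range n, (if j ≤ n then G (n - j) else 0) * -H (j + 1)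
          = -∑ j ∈ range n, G (n - j) * H (j + 1) := by
        rw [← Finset.sum_neg_distrib]
        apply Finset.sum_congr rfl
        intro j hj
        rw [Finset.mem_range] at hj
        rw [if_pos (le_of_lt hj), mul_neg]
      rw [hri, if_pos (Nat.zero_le _), Nat.sub_zero, hcong]
      have hs := hS n
      linarith
    | succ k' =>
      have hne : k' + 1 ≠ 0 := Nat.succ_ne_zero k'
      simp only [if_neg hne]
      have hcong : ∀ j, (if j ≤ n then G (n - j) else 0) * (if k' + 1 = j + 1 then 1 else 0)
          = if j = k' then (if j ≤ n then G (n - j) else 0) else 0 := by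
        intro j
        by_cases hjk : j = k'
        · subst hjk; simp
        · have h2 : ¬(k' + 1 = j + 1) := by omega
          rw [if_neg h2, mul_zero, if_neg hjk]
      rw [Finset.sum_congr rfl fun j _ => hcong j, Finset.sum_ite_eq' (range (n + 2)) k', hri]
      simp only [Finset.mem_range]
      split_ifs <;> first | rfl | omega | (congr 1; omega)
end
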